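/- Let G be a (P_7 + tP_2)-saturated graph with t ≥ 1 having at least 2 isolated vertices. Then every connected component of G of order 3, 5, or 6 induces a complete graph, and no connected component of G is isomorphic to K_2 or to K_4. -/

import Mathlib

open SimpleGraph

open SimpleGraph

/-- `H` has an (injective) copy inside `G`. -/
def ContainsCopy {α β : Type*} (H : SimpleGraph α) (G : SimpleGraph β) : Prop :=
  ∃ f : α ↪ β, ∀ a b, H.Adj a b → G.Adj (f a) (f b)

/-- The graph obtained from `G` by adding the edge `uv`. -/
def addE {V : Type*} (G : SimpleGraph V) (u v : V) : SimpleGraph V :=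
  G ⊔ SimpleGraph.fromEdgeSet {s(u, v)}

/-- `G` is `H`-saturated. -/
def IsSaturated {α β : Type*} (H : SimpleGraph α) (G : SimpleGraph β) : Prop :=
  ¬ ContainsCopy H G ∧ ∀ u v : β, u ≠ v → ¬ G.Adj u v → ContainsCopy H (addE G u v)

/-- The path `P_k` on `k` vertices. -/
def pathG (k : ℕ) : SimpleGraph (Fin k) where
  Adj x y := x.val + 1 = y.val ∨ y.val + 1 = x.val
  symm := ⟨fun x y h => h.symm⟩
  loopless := ⟨fun x h => by omega⟩

/-- `tP_2`: the disjoint union of `t` independent edges. -/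
def tP2 (t : ℕ) : SimpleGraph (Fin t × Fin 2) where
  Adj x y := x.1 = y.1 ∧ x.2 ≠ y.2
  symm := ⟨fun x y h => ⟨h.1.symm, h.2.symm⟩⟩
  loopless := ⟨fun x h => h.2 rfl⟩

/-- Disjoint union of two graphs. -/
def disjSum {α β : Type*} (G : SimpleGraph α) (H : SimpleGraph β) :
    SimpleGraph (α ⊕ β) where
  Adj x y := Sum.LiftRel G.Adj H.Adj x y
  symm := by
    constructor
    rintro x y (h | h)
    · exact Sum.LiftRel.inl h.symm
    · exact Sum.LiftRel.inr h.symm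
  loopless := by
    constructor
    rintro x (h | h)
    · exact h.ne rfl
    · exact h.ne rfl

/-- The linear forest `P_k + tP_2`. -/
def PkPlustP2 (k t : ℕ) : SimpleGraph (Fin k ⊕ Fin t × Fin 2) :=
  disjSum (pathG k) (tP2 t)

/-- The saturation number `sat(n, H)`. -/
noncomputable def satNumber {α : Type*} (H : SimpleGraph α) (n : ℕ) : ℕ :=
  sInf {m | ∃ G : SimpleGraph (Fin n), IsSaturated H G ∧ G.edgeSet.ncard = m}

/-- The matching number `α'(G)`. -/
noncomputable def matchNum {V : Type*} (G : SimpleGraph V) : ℕ :=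
  sSup {m | ContainsCopy (tP2 m) G}

/-- `α_k(G)`: the largest `m` with `P_k + mP_2 ⊆ G`. -/
noncomputable def alphaK {V : Type*} (k : ℕ) (G : SimpleGraph V) : ℕ :=
  sSup {m | ContainsCopy (PkPlustP2 k m) G}

-- AUX START
namespace Sat356

abbrev Wt (t : ℕ) := Fin 7 ⊕ Fin t × Fin 2

variable {V : Type*}

lemma addE_adj (G : SimpleGraph V) (u v x y : V) :
    (addE G u v).Adj x y ↔ G.Adj x y ∨ (x ≠ y ∧ ((x = u ∧ y = v) ∨ (x = v ∧ y = u))) := by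
  unfold addE
  rw [SimpleGraph.sup_adj, SimpleGraph.fromEdgeSet_adj]
  simp only [Set.mem_singleton_iff, Sym2.eq_iff]
  tauto

lemma H_adj_inl {t : ℕ} {j j' : Fin 7} :
    (PkPlustP2 7 t).Adj (Sum.inl j) (Sum.inl j') ↔ (j.val + 1 = j'.val ∨ j'.val + 1 = j.val) := by
  constructor
  · rintro (h | h); exact h
  · intro h; exact Sum.LiftRel.inl h

lemma H_adj_inr {t : ℕ} {p q : Fin t × Fin 2} :
    (PkPlustP2 7 t).Adj (Sum.inr p) (Sum.inr q) ↔ (p.1 = q.1 ∧ p.2 ≠ q.2) := by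
  constructor
  · rintro (h | h); exact h
  · intro h; exact Sum.LiftRel.inr h

lemma H_adj_mixed {t : ℕ} {j : Fin 7} {p : Fin t × Fin 2} :
    ¬ (PkPlustP2 7 t).Adj (Sum.inl j) (Sum.inr p) := by
  rintro (h | h)

lemma H_adj_mixed' {t : ℕ} {j : Fin 7} {p : Fin t × Fin 2} :
    ¬ (PkPlustP2 7 t).Adj (Sum.inr p) (Sum.inl j) := by
  rintro (h | h)

lemma H_adj_succ {t : ℕ} {m : ℕ} (h : m < 6) :
    (PkPlustP2 7 t).Adj (Sum.inl ⟨m, by omega⟩) (Sum.inl ⟨m + 1, by omega⟩) := by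
  rw [H_adj_inl]; left; rfl

lemma H_adj_pair {t : ℕ} (i : Fin t) :
    (PkPlustP2 7 t).Adj (Sum.inr (i, 0)) (Sum.inr (i, 1)) := by
  rw [H_adj_inr]
  exact ⟨rfl, (by decide : (0:Fin 2) ≠ 1)⟩

lemma H_pair_of_adj {t : ℕ} {i i' : Fin t} {c c' : Fin 2}
    (h : (PkPlustP2 7 t).Adj (Sum.inr (i, c)) (Sum.inr (i', c'))) : i = i' ∧ c ≠ c' := by
  rw [H_adj_inr] at h; exact h

lemma chain_mem {Gr : SimpleGraph V} {S : Set V} (hS : ∀ x ∈ S, ∀ y, Gr.Adj x y → y ∈ S)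
    (g : Fin 7 → V) (hadj : ∀ m : ℕ, (hm : m < 6) → Gr.Adj (g ⟨m, by omega⟩) (g ⟨m + 1, by omega⟩))
    (j₀ : Fin 7) (h₀ : g j₀ ∈ S) : ∀ j, g j ∈ S := by
  have up : ∀ m : ℕ, (hm : m < 7) → j₀.val ≤ m → g ⟨m, hm⟩ ∈ S := by
    intro m
    induction m with
    | zero =>
      intro hm h
      have : j₀ = ⟨0, hm⟩ := by apply Fin.ext; simp only [Fin.val_mk]; omega
      rwa [this] at h₀
    | succ n ih =>
      intro hm h
      rcases Nat.lt_or_ge j₀.val (n + 1) with h' | h'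
      · have hn : g ⟨n, by omega⟩ ∈ S := ih (by omega) (by omega)
        exact hS _ hn _ (hadj n (by omega))
      · have : j₀ = ⟨n + 1, hm⟩ := by apply Fin.ext; simp only [Fin.val_mk]; omega
        rwa [this] at h₀
  have down : ∀ d m : ℕ, (hm : m < 7) → m + d = j₀.val → g ⟨m, hm⟩ ∈ S := by
    intro d
    induction d with
    | zero =>
      intro m hm h
      have : j₀ = ⟨m, hm⟩ := by apply Fin.ext; simp only [Fin.val_mk]; omega
      rwa [this] at h₀
    | succ n ih =>
      intro m hm h
      have hm1 : g ⟨m + 1, by omega⟩ ∈ S := ih (m + 1) (by omega) (by omega)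
      exact hS _ hm1 _ (hadj m (by omega)).symm
  intro j
  rcases Nat.lt_or_ge j.val j₀.val with h | h
  · have := down (j₀.val - j.val) j.val j.isLt (by omega)
    convert this using 2
  · have := up j.val j.isLt h
    convert this using 2

lemma pigeon7 [Fintype V] {g : Fin 7 → V} (hg : Function.Injective g) {T : Set V}
    (hT : ∀ j, g j ∈ T) (hc : T.ncard ≤ 6) : False := by
  classical
  have hfin : T.Finite := T.toFinite
  have h7 : (Finset.image g Finset.univ).card = 7 := by
    rw [Finset.card_image_of_injective _ hg, Finset.card_univ, Fintype.card_fin]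
  have hsub : Finset.image g Finset.univ ⊆ hfin.toFinset := by
    intro x hx
    simp only [Finset.mem_image] at hx
    obtain ⟨j, _, rfl⟩ := hx
    simp only [Set.Finite.mem_toFinset]
    exact hT j
  have hle := Finset.card_le_card hsub
  rw [h7, ← Set.ncard_eq_toFinset_card _ hfin] at hle
  omega

lemma pigeon2 [Fintype V] {T : Set V} {x y : V} (hx : x ∈ T) (hy : y ∈ T) (hxy : x ≠ y)
    (hc : T.ncard ≤ 1) : False := by
  have hsub : ({x, y} : Set V) ⊆ T := by
    intro z hz; rcases hz with rfl | hz
    · exact hx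
    · rw [Set.mem_singleton_iff] at hz; subst hz; exact hy
  have := Set.ncard_le_ncard hsub T.toFinite
  rw [Set.ncard_pair hxy] at this
  omega

lemma pigeon4 [Fintype V] {T : Set V} {x1 x2 x3 x4 : V} (h1 : x1 ∈ T) (h2 : x2 ∈ T)
    (h3 : x3 ∈ T) (h4 : x4 ∈ T) (h12 : x1 ≠ x2) (h13 : x1 ≠ x3) (h14 : x1 ≠ x4)
    (h23 : x2 ≠ x3) (h24 : x2 ≠ x4) (h34 : x3 ≠ x4) (hc : T.ncard ≤ 3) : False := by
  have hcard : ({x1, x2, x3, x4} : Set V).ncard = 4 := by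
    rw [Set.ncard_insert_of_notMem (by simp [h12, h13, h14]),
      Set.ncard_insert_of_notMem (by simp [h23, h24]),
      Set.ncard_insert_of_notMem (by simp [h34]), Set.ncard_singleton]
  have hsub : ({x1, x2, x3, x4} : Set V) ⊆ T := by
    intro z hz
    rcases hz with rfl | rfl | rfl | hz
    · exact h1
    · exact h2
    · exact h3
    · rw [Set.mem_singleton_iff] at hz; subst hz; exact h4
  have := Set.ncard_le_ncard hsub T.toFinite
  omega

end Sat356

namespace Sat356
variable {V : Type*}

lemma newEdge_used {t : ℕ} {G : SimpleGraph V} {u v : V}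
    (hfree : ¬ ContainsCopy (PkPlustP2 7 t) G)
    (f : Wt t → V) (hinj : Function.Injective f)
    (hf : ∀ x y, (PkPlustP2 7 t).Adj x y → (addE G u v).Adj (f x) (f y)) :
    ∃ x y, (PkPlustP2 7 t).Adj x y ∧ f x = u ∧ f y = v := by
  by_contra hc
  push_neg at hc
  apply hfree
  refine ⟨⟨f, hinj⟩, fun a b hab => ?_⟩
  have h := hf a b hab
  rw [addE_adj] at h
  rcases h with h | ⟨_, ⟨h1, h2⟩ | ⟨h1, h2⟩⟩
  · exact h
  · exact absurd h2 (hc a b hab h1)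
  · exact absurd h1 (hc b a (hab.symm) h2)

lemma reroute {t : ℕ} {G : SimpleGraph V} {u v : V} (f : Wt t → V)
    (hinj : Function.Injective f)
    (hf : ∀ x y, (PkPlustP2 7 t).Adj x y → (addE G u v).Adj (f x) (f y))
    (i₀ : Fin t) (hu : ∃ c, f (Sum.inr (i₀, c)) = u) (hv : ∃ c, f (Sum.inr (i₀, c)) = v)
    (P : Fin t → Prop) (hP₀ : P i₀)
    (r : Fin t → V × V)
    (hredge : ∀ i, P i → G.Adj (r i).1 (r i).2)
    (hrinj : ∀ i j, P i → P j → i ≠ j →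
      (r i).1 ≠ (r j).1 ∧ (r i).1 ≠ (r j).2 ∧ (r i).2 ≠ (r j).1 ∧ (r i).2 ≠ (r j).2)
    (havoid : ∀ x : Wt t, (∀ i c, P i → x ≠ Sum.inr (i, c)) → ∀ i, P i →
      f x ≠ (r i).1 ∧ f x ≠ (r i).2) :
    ContainsCopy (PkPlustP2 7 t) G := by
  classical
  set f' : Wt t → V := fun x => match x with
    | Sum.inl j => f (Sum.inl j)
    | Sum.inr (i, c) => if P i then (if c = 0 then (r i).1 else (r i).2) else f (Sum.inr (i, c))
    with hf'def
  have hval_inl : ∀ j, f' (Sum.inl j) = f (Sum.inl j) := fun j => rfl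
  have hval_P : ∀ i c, P i → f' (Sum.inr (i, c)) = (if c = 0 then (r i).1 else (r i).2) := by
    intro i c hPi; simp only [hf'def, if_pos hPi]
  have hval_nP : ∀ i c, ¬ P i → f' (Sum.inr (i, c)) = f (Sum.inr (i, c)) := by
    intro i c hPi; simp only [hf'def, if_neg hPi]
  have havoid_inl : ∀ j i, P i → f (Sum.inl j) ≠ (r i).1 ∧ f (Sum.inl j) ≠ (r i).2 := by
    intro j i hPi
    exact havoid _ (fun _ _ _ h => by exact Sum.inl_ne_inr h) i hPi
  have havoid_inr : ∀ i c, ¬ P i → ∀ i', P i' →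
      f (Sum.inr (i, c)) ≠ (r i').1 ∧ f (Sum.inr (i, c)) ≠ (r i').2 := by
    intro i c hPi i' hPi'
    refine havoid _ (fun i'' c'' hPi'' h => ?_) i' hPi'
    obtain ⟨h1, h2⟩ := Prod.mk.injEq .. ▸ (Sum.inr.injEq .. ▸ h)
    exact hPi (h1 ▸ hPi'')
  have hne_uv : ∀ x : Wt t, (∀ c, x ≠ Sum.inr (i₀, c)) → f x ≠ u ∧ f x ≠ v := by
    intro x hx
    obtain ⟨cu, hcu⟩ := hu
    obtain ⟨cv, hcv⟩ := hv
    constructor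
    · intro h; exact hx cu (hinj (h.trans hcu.symm))
    · intro h; exact hx cv (hinj (h.trans hcv.symm))
  have hinj' : Function.Injective f' := by
    intro x y h
    rcases x with jx | ⟨ix, cx⟩ <;> rcases y with jy | ⟨iy, cy⟩
    · exact hinj h
    · by_cases hPy : P iy
      · rw [hval_inl, hval_P _ _ hPy] at h
        rcases havoid_inl jx iy hPy with ⟨h1, h2⟩
        by_cases hcy : cy = 0
        · rw [if_pos hcy] at h; exact absurd h h1
        · rw [if_neg hcy] at h; exact absurd h h2
      · rw [hval_inl, hval_nP _ _ hPy] at h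
        exact hinj h
    · by_cases hPx : P ix
      · rw [hval_inl, hval_P _ _ hPx] at h
        rcases havoid_inl jy ix hPx with ⟨h1, h2⟩
        by_cases hcx : cx = 0
        · rw [if_pos hcx] at h; exact absurd h.symm h1
        · rw [if_neg hcx] at h; exact absurd h.symm h2
      · rw [hval_inl, hval_nP _ _ hPx] at h
        exact hinj h
    · by_cases hPx : P ix <;> by_cases hPy : P iy
      · rw [hval_P _ _ hPx, hval_P _ _ hPy] at h
        by_cases hii : ix = iy
        · subst hii
          have : cx = cy := by
            by_cases hcx : cx = 0 <;> by_cases hcy : cy = 0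
            · rw [hcx, hcy]
            · rw [if_pos hcx, if_neg hcy] at h
              exact absurd h (hredge ix hPx).ne
            · rw [if_neg hcx, if_pos hcy] at h
              exact absurd h.symm (hredge ix hPx).ne
            · omega
          rw [this]
        · obtain ⟨h1, h2, h3, h4⟩ := hrinj ix iy hPx hPy hii
          by_cases hcx : cx = 0 <;> by_cases hcy : cy = 0 <;>
            simp only [if_pos, if_neg, hcx, hcy, if_true, if_false] at h
          · exact absurd h h1
          · exact absurd h h2
          · exact absurd h h3
          · exact absurd h h4
      · rw [hval_P _ _ hPx, hval_nP _ _ hPy] at h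
        rcases havoid_inr iy cy hPy ix hPx with ⟨h1, h2⟩
        by_cases hcx : cx = 0
        · rw [if_pos hcx] at h; exact absurd h.symm h1
        · rw [if_neg hcx] at h; exact absurd h.symm h2
      · rw [hval_nP _ _ hPx, hval_P _ _ hPy] at h
        rcases havoid_inr ix cx hPx iy hPy with ⟨h1, h2⟩
        by_cases hcy : cy = 0
        · rw [if_pos hcy] at h; exact absurd h h1
        · rw [if_neg hcy] at h; exact absurd h h2
      · rw [hval_nP _ _ hPx, hval_nP _ _ hPy] at h
        exact hinj h
  refine ⟨⟨f', hinj'⟩, fun x y hxy => ?_⟩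
  simp only [Function.Embedding.coeFn_mk]
  rcases x with jx | ⟨ix, cx⟩ <;> rcases y with jy | ⟨iy, cy⟩
  · rw [hval_inl, hval_inl]
    have h := hf _ _ hxy
    rw [addE_adj] at h
    rcases h with h | ⟨_, ⟨h1, _⟩ | ⟨h1, _⟩⟩
    · exact h
    · exact absurd (hne_uv _ (fun c h => Sum.inl_ne_inr h)).1 (not_not.mpr h1)
    · exact absurd (hne_uv _ (fun c h => Sum.inl_ne_inr h)).2 (not_not.mpr h1)
  · exact absurd hxy H_adj_mixed
  · exact absurd hxy H_adj_mixed'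
  · obtain ⟨hii, hcc⟩ := H_pair_of_adj hxy
    subst hii
    by_cases hPx : P ix
    · rw [hval_P _ _ hPx, hval_P _ _ hPx]
      by_cases hcx : cx = 0 <;> by_cases hcy : cy = 0
      · exact absurd (hcx.trans hcy.symm) hcc
      · rw [if_pos hcx, if_neg hcy]; exact hredge ix hPx
      · rw [if_neg hcx, if_pos hcy]; exact (hredge ix hPx).symm
      · omega
    · rw [hval_nP _ _ hPx, hval_nP _ _ hPx]
      have h := hf _ _ hxy
      rw [addE_adj] at h
      rcases h with h | ⟨_, ⟨h1, _⟩ | ⟨h1, _⟩⟩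
      · exact h
      · obtain ⟨cu, hcu⟩ := hu
        have := hinj (h1.trans hcu.symm)
        obtain ⟨hie, _⟩ := Prod.mk.injEq .. ▸ (Sum.inr.injEq .. ▸ this)
        exact absurd (hie ▸ hP₀) hPx
      · obtain ⟨cv, hcv⟩ := hv
        have := hinj (h1.trans hcv.symm)
        obtain ⟨hie, _⟩ := Prod.mk.injEq .. ▸ (Sum.inr.injEq .. ▸ this)
        exact absurd (hie ▸ hP₀) hPx

end Sat356

namespace Sat356
variable {V : Type*}

lemma supp_closed {G : SimpleGraph V} (C : G.ConnectedComponent) {x y : V}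
    (hx : x ∈ C.supp) (h : G.Adj x y) : y ∈ C.supp := by
  rw [SimpleGraph.ConnectedComponent.mem_supp_iff] at hx ⊢
  rw [← hx]
  exact SimpleGraph.ConnectedComponent.connectedComponentMk_eq_of_adj h.symm

lemma supp_closed_addE {G : SimpleGraph V} (C : G.ConnectedComponent) {u v : V}
    (hu : u ∈ C.supp) (hv : v ∈ C.supp) :
    ∀ x ∈ C.supp, ∀ y, (addE G u v).Adj x y → y ∈ C.supp := by
  intro x hx y h
  rw [addE_adj] at h
  rcases h with h | ⟨_, ⟨rfl, rfl⟩ | ⟨rfl, rfl⟩⟩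
  · exact supp_closed C hx h
  · exact hv
  · exact hu

lemma exists_nbr {G : SimpleGraph V} {C : G.ConnectedComponent} {x y : V}
    (hx : x ∈ C.supp) (hy : y ∈ C.supp) (hne : x ≠ y) : ∃ z, G.Adj x z := by
  rw [SimpleGraph.ConnectedComponent.mem_supp_iff] at hx hy
  have hr : G.Reachable x y := SimpleGraph.ConnectedComponent.exact (hx.trans hy.symm)
  obtain ⟨w⟩ := hr
  cases w with
  | nil => exact absurd rfl hne
  | cons h _ => exact ⟨_, h⟩

lemma crossing_of_walk {G : SimpleGraph V} {S : Set V} {x y : V} (w : G.Walk x y) :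
    x ∈ S → y ∉ S → ∃ p q, p ∈ S ∧ q ∉ S ∧ G.Adj p q := by
  induction w with
  | nil => intro hx hy; exact absurd hx hy
  | @cons a b c h p ih =>
    intro hx hy
    by_cases hb : b ∈ S
    · exact ih hb hy
    · exact ⟨a, b, hx, hb, h⟩

lemma crossing {G : SimpleGraph V} {C : G.ConnectedComponent} {S : Set V} {x y : V}
    (hx : x ∈ C.supp) (hy : y ∈ C.supp) (hxS : x ∈ S) (hyS : y ∉ S) :
    ∃ p q, p ∈ S ∧ q ∉ S ∧ G.Adj p q := by
  rw [SimpleGraph.ConnectedComponent.mem_supp_iff] at hx hy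
  have hr : G.Reachable x y := SimpleGraph.ConnectedComponent.exact (hx.trans hy.symm)
  obtain ⟨w⟩ := hr
  exact crossing_of_walk w hxS hyS

lemma isolated_not_adj {G : SimpleGraph V} {w : V} (h : G.neighborSet w = ∅) (x : V) :
    ¬ G.Adj x w := by
  intro ha
  have : x ∈ G.neighborSet w := ha.symm
  rw [h] at this
  exact this

lemma isolated_eq_of_mem_supp {G : SimpleGraph V} {w : V} (h : G.neighborSet w = ∅)
    {C : G.ConnectedComponent} (hw : w ∈ C.supp) : ∀ y ∈ C.supp, y = w := by
  intro y hy
  rw [SimpleGraph.ConnectedComponent.mem_supp_iff] at hw hy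
  have hr : G.Reachable w y := SimpleGraph.ConnectedComponent.exact (hw.trans hy.symm)
  obtain ⟨wk⟩ := hr
  cases wk with
  | nil => rfl
  | cons ha _ =>
    exfalso
    have : _ ∈ G.neighborSet w := ha
    rw [h] at this
    exact this

lemma isolated_not_mem_supp {G : SimpleGraph V} {w : V} (h : G.neighborSet w = ∅)
    {C : G.ConnectedComponent} {x y : V} (hx : x ∈ C.supp) (hy : y ∈ C.supp) (hxy : x ≠ y) :
    w ∉ C.supp := by
  intro hw
  exact hxy ((isolated_eq_of_mem_supp h hw x hx).trans (isolated_eq_of_mem_supp h hw y hy).symm)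

/-- unpack a copy into `addE G u v` -/
lemma sat_copy {t : ℕ} {G : SimpleGraph V} (hsat : IsSaturated (PkPlustP2 7 t) G)
    {u v : V} (hne : u ≠ v) (hnadj : ¬ G.Adj u v) :
    ∃ f : Wt t → V, Function.Injective f ∧
      ∀ x y, (PkPlustP2 7 t).Adj x y → (addE G u v).Adj (f x) (f y) := by
  obtain ⟨f, hf⟩ := hsat.2 u v hne hnadj
  exact ⟨f, f.inj', hf⟩

end Sat356

namespace Sat356
variable {V : Type*}

def mem6 (u v a b c d x : V) : Prop := x = u ∨ x = v ∨ x = a ∨ x = b ∨ x = c ∨ x = d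

def NO3 (G : SimpleGraph V) (u v a b c d : V) : Prop :=
  ¬ ∃ x₁ y₁ x₂ y₂ x₃ y₃ : V, mem6 u v a b c d x₁ ∧ mem6 u v a b c d y₁ ∧
    mem6 u v a b c d x₂ ∧ mem6 u v a b c d y₂ ∧ mem6 u v a b c d x₃ ∧ mem6 u v a b c d y₃ ∧
    x₁ ≠ x₂ ∧ x₁ ≠ y₂ ∧ y₁ ≠ x₂ ∧ y₁ ≠ y₂ ∧ x₁ ≠ x₃ ∧ x₁ ≠ y₃ ∧ y₁ ≠ x₃ ∧ y₁ ≠ y₃ ∧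
    x₂ ≠ x₃ ∧ x₂ ≠ y₃ ∧ y₂ ≠ x₃ ∧ y₂ ≠ y₃ ∧ G.Adj x₁ y₁ ∧ G.Adj x₂ y₂ ∧ G.Adj x₃ y₃

def D2ALL (G : SimpleGraph V) (u v a b c d : V) : Prop :=
  ∀ z, mem6 u v a b c d z → ∃ p q r s : V, mem6 u v a b c d p ∧ mem6 u v a b c d q ∧
    mem6 u v a b c d r ∧ mem6 u v a b c d s ∧
    p ≠ z ∧ q ≠ z ∧ r ≠ z ∧ s ≠ z ∧ p ≠ r ∧ p ≠ s ∧ q ≠ r ∧ q ≠ s ∧ G.Adj p q ∧ G.Adj r s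

def CR3 (G : SimpleGraph V) (p1 p2 p3 q1 q2 q3 : V) : Prop :=
  ∃ p q : V, (p = p1 ∨ p = p2 ∨ p = p3) ∧ (q = q1 ∨ q = q2 ∨ q = q3) ∧ G.Adj p q

lemma NO3_perm {G : SimpleGraph V} {u v a b c d u' v' a' b' c' d' : V}
    (hm : ∀ x, mem6 u' v' a' b' c' d' x → mem6 u v a b c d x)
    (h : NO3 G u v a b c d) : NO3 G u' v' a' b' c' d' := by
  rintro ⟨x1, y1, x2, y2, x3, y3, m1, m2, m3, m4, m5, m6, hrest⟩
  exact h ⟨x1, y1, x2, y2, x3, y3, hm _ m1, hm _ m2, hm _ m3, hm _ m4, hm _ m5, hm _ m6, hrest⟩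

lemma D2_perm {G : SimpleGraph V} {u v a b c d u' v' a' b' c' d' : V}
    (hm : ∀ x, mem6 u' v' a' b' c' d' x ↔ mem6 u v a b c d x)
    (h : D2ALL G u v a b c d) : D2ALL G u' v' a' b' c' d' := by
  intro z hz
  obtain ⟨p, q, r, s, m1, m2, m3, m4, hrest⟩ := h z ((hm z).mp hz)
  exact ⟨p, q, r, s, (hm p).mpr m1, (hm q).mpr m2, (hm r).mpr m3, (hm s).mpr m4, hrest⟩

lemma CR3_perm {G : SimpleGraph V} {p1 p2 p3 q1 q2 q3 p1' p2' p3' q1' q2' q3' : V}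
    (hp : ∀ x : V, (x = p1 ∨ x = p2 ∨ x = p3) → (x = p1' ∨ x = p2' ∨ x = p3'))
    (hq : ∀ x : V, (x = q1 ∨ x = q2 ∨ x = q3) → (x = q1' ∨ x = q2' ∨ x = q3'))
    (h : CR3 G p1 p2 p3 q1 q2 q3) : CR3 G p1' p2' p3' q1' q2' q3' := by
  obtain ⟨p, q, hp', hq', hA⟩ := h
  exact ⟨p, q, hp _ hp', hq _ hq', hA⟩

/-- Consume a D2 instance at `α` where `(α, β)` is a known edge: either some returned edge
contains `β` (yielding an edge `β–s'` plus a second disjoint edge), or we get 3 disjoint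
edges, contradicting NO3. -/
lemma D2_consume {G : SimpleGraph V} {u v a b c d α β : V}
    (hno3 : NO3 G u v a b c d)
    (hmα : mem6 u v a b c d α) (hmβ : mem6 u v a b c d β) (hαβ : G.Adj α β)
    (h : ∃ p q r s : V, mem6 u v a b c d p ∧ mem6 u v a b c d q ∧
      mem6 u v a b c d r ∧ mem6 u v a b c d s ∧
      p ≠ α ∧ q ≠ α ∧ r ≠ α ∧ s ≠ α ∧ p ≠ r ∧ p ≠ s ∧ q ≠ r ∧ q ≠ s ∧ G.Adj p q ∧ G.Adj r s) :
    ∃ s' x y : V, mem6 u v a b c d s' ∧ mem6 u v a b c d x ∧ mem6 u v a b c d y ∧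
      s' ≠ α ∧ x ≠ α ∧ y ≠ α ∧ x ≠ β ∧ y ≠ β ∧ x ≠ s' ∧ y ≠ s' ∧ G.Adj β s' ∧ G.Adj x y := by
  obtain ⟨p, q, r, s, hmp, hmq, hmr, hms, hpα, hqα, hrα, hsα, hpr, hps, hqr, hqs, h1, h2⟩ := h
  by_cases hb : β = p ∨ β = q ∨ β = r ∨ β = s
  · rcases hb with rfl | rfl | rfl | rfl
    · exact ⟨q, r, s, hmq, hmr, hms, hqα, hrα, hsα, hpr.symm, hps.symm, hqr.symm, hqs.symm,
        h1, h2⟩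
    · exact ⟨p, r, s, hmp, hmr, hms, hpα, hrα, hsα, hqr.symm, hqs.symm, hpr.symm, hps.symm,
        h1.symm, h2⟩
    · exact ⟨s, p, q, hms, hmp, hmq, hsα, hpα, hqα, hpr, hqr, hps, hqs, h2, h1⟩
    · exact ⟨r, p, q, hmr, hmp, hmq, hrα, hpα, hqα, hps, hqs, hpr, hqr, h2.symm, h1⟩
  · push_neg at hb
    obtain ⟨hbp, hbq, hbr, hbs⟩ := hb
    exact absurd ⟨p, q, r, s, α, β, hmp, hmq, hmr, hms, hmα, hmβ,
      hpr, hps, hqr, hqs, hpα, (fun h => hbp h.symm), hqα, (fun h => hbq h.symm),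
      hrα, (fun h => hbr h.symm), hsα, (fun h => hbs h.symm), h1, h2, hαβ⟩ hno3

end Sat356

namespace Sat356
variable {V : Type*}

lemma kern_va {G : SimpleGraph V} {u v a b c d : V} (huv : u ≠ v) (hua : u ≠ a) (hub : u ≠ b) (huc : u ≠ c) (hud : u ≠ d)
    (hva : v ≠ a) (hvb : v ≠ b) (hvc : v ≠ c) (hvd : v ≠ d) (hab : a ≠ b) (hac : a ≠ c)
    (had : a ≠ d) (hbc : b ≠ c) (hbd : b ≠ d) (hcd : c ≠ d)
    (hAab : G.Adj a b) (hAcd : G.Adj c d) (hNuv : ¬ G.Adj u v)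
    (hno3 : NO3 G u v a b c d) (hD2 : D2ALL G u v a b c d)
    (hAua : G.Adj u a) (hAva : G.Adj v a) : False := by
  have memu : mem6 u v a b c d u := Or.inl rfl
  have memv : mem6 u v a b c d v := Or.inr (Or.inl rfl)
  have mema : mem6 u v a b c d a := Or.inr (Or.inr (Or.inl rfl))
  have memb : mem6 u v a b c d b := Or.inr (Or.inr (Or.inr (Or.inl rfl)))
  have memc : mem6 u v a b c d c := Or.inr (Or.inr (Or.inr (Or.inr (Or.inl rfl))))
  have memd : mem6 u v a b c d d := Or.inr (Or.inr (Or.inr (Or.inr (Or.inr rfl))))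
  obtain ⟨s', x, y, hms', hmx, hmy, hs'a, hxa, hya, hxb, hyb, hxs', hys', hAbs', hAxy⟩ :=
    D2_consume hno3 mema memb hAab (hD2 a mema)
  rcases hms' with hs | hs | hs | hs | hs | hs
  · exact hno3 ⟨b, u, c, d, v, a, memb, memu, memc, memd, memv, mema, hbc, hbd, huc, hud, hvb.symm, hab.symm, huv, hua, hvc.symm, hac.symm, hvd.symm, had.symm, (hs ▸ hAbs'), hAcd, hAva⟩
  · exact hno3 ⟨b, v, u, a, c, d, memb, memv, memu, mema, memc, memd, hub.symm, hab.symm, huv.symm, hva, hbc, hbd, hvc, hvd, huc, hud, hac, had, (hs ▸ hAbs'), hAua, hAcd⟩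
  · exact hs'a hs
  · exact hAbs'.ne hs.symm
  · have hxs' : x ≠ c := hs ▸ hxs'
    have hys' : y ≠ c := hs ▸ hys'
    have hAbs' : G.Adj b c := hs ▸ hAbs'
    rcases hmx with hx | hx | hx | hx | hx | hx
    · rcases hmy with hy | hy | hy | hy | hy | hy
      · exact hAxy.ne (hx.trans hy.symm)
      · exact hNuv (hx ▸ hy ▸ hAxy)
      · exact hya hy
      · exact hyb hy
      · exact hys' hy
      · exact hno3 ⟨u, d, b, c, v, a, memu, memd, memb, memc, memv, mema, hub, huc, hbd.symm, hcd.symm, huv, hua, hvd.symm, had.symm, hvb.symm, hab.symm, hvc.symm, hac.symm, (hx ▸ hy ▸ hAxy), hAbs', hAva⟩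
    · rcases hmy with hy | hy | hy | hy | hy | hy
      · exact hNuv (hx ▸ hy ▸ hAxy).symm
      · exact hAxy.ne (hx.trans hy.symm)
      · exact hya hy
      · exact hyb hy
      · exact hys' hy
      · exact hno3 ⟨v, d, b, c, u, a, memv, memd, memb, memc, memu, mema, hvb, hvc, hbd.symm, hcd.symm, huv.symm, hva, hud.symm, had.symm, hub.symm, hab.symm, huc.symm, hac.symm, (hx ▸ hy ▸ hAxy), hAbs', hAua⟩
    · exact hxa hx
    · exact hxb hx
    · exact hxs' hx
    · rcases hmy with hy | hy | hy | hy | hy | hy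
      · exact hno3 ⟨u, d, b, c, v, a, memu, memd, memb, memc, memv, mema, hub, huc, hbd.symm, hcd.symm, huv, hua, hvd.symm, had.symm, hvb.symm, hab.symm, hvc.symm, hac.symm, (hx ▸ hy ▸ hAxy).symm, hAbs', hAva⟩
      · exact hno3 ⟨v, d, b, c, u, a, memv, memd, memb, memc, memu, mema, hvb, hvc, hbd.symm, hcd.symm, huv.symm, hva, hud.symm, had.symm, hub.symm, hab.symm, huc.symm, hac.symm, (hx ▸ hy ▸ hAxy).symm, hAbs', hAua⟩
      · exact hya hy
      · exact hyb hy
      · exact hys' hy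
      · exact hAxy.ne (hx.trans hy.symm)
  · have hxs' : x ≠ d := hs ▸ hxs'
    have hys' : y ≠ d := hs ▸ hys'
    have hAbs' : G.Adj b d := hs ▸ hAbs'
    rcases hmx with hx | hx | hx | hx | hx | hx
    · rcases hmy with hy | hy | hy | hy | hy | hy
      · exact hAxy.ne (hx.trans hy.symm)
      · exact hNuv (hx ▸ hy ▸ hAxy)
      · exact hya hy
      · exact hyb hy
      · exact hno3 ⟨u, c, b, d, v, a, memu, memc, memb, memd, memv, mema, hub, hud, hbc.symm, hcd, huv, hua, hvc.symm, hac.symm, hvb.symm, hab.symm, hvd.symm, had.symm, (hx ▸ hy ▸ hAxy), hAbs', hAva⟩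
      · exact hys' hy
    · rcases hmy with hy | hy | hy | hy | hy | hy
      · exact hNuv (hx ▸ hy ▸ hAxy).symm
      · exact hAxy.ne (hx.trans hy.symm)
      · exact hya hy
      · exact hyb hy
      · exact hno3 ⟨v, c, b, d, u, a, memv, memc, memb, memd, memu, mema, hvb, hvd, hbc.symm, hcd, huv.symm, hva, huc.symm, hac.symm, hub.symm, hab.symm, hud.symm, had.symm, (hx ▸ hy ▸ hAxy), hAbs', hAua⟩
      · exact hys' hy
    · exact hxa hx
    · exact hxb hx
    · rcases hmy with hy | hy | hy | hy | hy | hy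
      · exact hno3 ⟨u, c, b, d, v, a, memu, memc, memb, memd, memv, mema, hub, hud, hbc.symm, hcd, huv, hua, hvc.symm, hac.symm, hvb.symm, hab.symm, hvd.symm, had.symm, (hx ▸ hy ▸ hAxy).symm, hAbs', hAva⟩
      · exact hno3 ⟨v, c, b, d, u, a, memv, memc, memb, memd, memu, mema, hvb, hvd, hbc.symm, hcd, huv.symm, hva, huc.symm, hac.symm, hub.symm, hab.symm, hud.symm, had.symm, (hx ▸ hy ▸ hAxy).symm, hAbs', hAua⟩
      · exact hya hy
      · exact hyb hy
      · exact hAxy.ne (hx.trans hy.symm)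
      · exact hys' hy
    · exact hxs' hx

lemma kern_vc {G : SimpleGraph V} {u v a b c d : V} (huv : u ≠ v) (hua : u ≠ a) (hub : u ≠ b) (huc : u ≠ c) (hud : u ≠ d)
    (hva : v ≠ a) (hvb : v ≠ b) (hvc : v ≠ c) (hvd : v ≠ d) (hab : a ≠ b) (hac : a ≠ c)
    (had : a ≠ d) (hbc : b ≠ c) (hbd : b ≠ d) (hcd : c ≠ d)
    (hAab : G.Adj a b) (hAcd : G.Adj c d) (hNuv : ¬ G.Adj u v)
    (hno3 : NO3 G u v a b c d) (hD2 : D2ALL G u v a b c d)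
    (hCR2 : CR3 G u a b v c d)
    (hAua : G.Adj u a) (hAvc : G.Adj v c) : False := by
  have memu : mem6 u v a b c d u := Or.inl rfl
  have memv : mem6 u v a b c d v := Or.inr (Or.inl rfl)
  have mema : mem6 u v a b c d a := Or.inr (Or.inr (Or.inl rfl))
  have memb : mem6 u v a b c d b := Or.inr (Or.inr (Or.inr (Or.inl rfl)))
  have memc : mem6 u v a b c d c := Or.inr (Or.inr (Or.inr (Or.inr (Or.inl rfl))))
  have memd : mem6 u v a b c d d := Or.inr (Or.inr (Or.inr (Or.inr (Or.inr rfl))))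
  obtain ⟨s', x, y, hms', hmx, hmy, hs'a, hxa, hya, hxb, hyb, hxs', hys', hAbs', hAxy⟩ :=
    D2_consume hno3 mema memb hAab (hD2 a mema)
  have step2 : G.Adj u b → False := by
    intro hAub
    obtain ⟨s2, x2, y2, hms2, hmx2, hmy2, hs2c, hx2c, hy2c, hx2d, hy2d, hx2s, hy2s, hAds2, hAx2y2⟩ :=
      D2_consume hno3 memc memd hAcd (hD2 c memc)
    have step3 : G.Adj v d → False := by
      intro hAvd
      obtain ⟨p, q, hp, hq, hApq⟩ := hCR2
      rcases hp with hp | hp | hp <;> rcases hq with hq | hq | hq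
      · exact hNuv (hp ▸ hq ▸ hApq)
      · exact hno3 ⟨u, c, a, b, v, d, memu, memc, mema, memb, memv, memd, hua, hub, hac.symm, hbc.symm, huv, hud, hvc.symm, hcd, hva.symm, had, hvb.symm, hbd, (hp ▸ hq ▸ hApq), hAab, hAvd⟩
      · exact hno3 ⟨u, d, v, c, a, b, memu, memd, memv, memc, mema, memb, huv, huc, hvd.symm, hcd.symm, hua, hub, had.symm, hbd.symm, hva, hvb, hac.symm, hbc.symm, (hp ▸ hq ▸ hApq), hAvc, hAab⟩
      · exact hno3 ⟨v, a, u, b, c, d, memv, mema, memu, memb, memc, memd, huv.symm, hvb, hua.symm, hab, hvc, hvd, hac, had, huc, hud, hbc, hbd, (hp ▸ hq ▸ hApq).symm, hAub, hAcd⟩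
      · exact hno3 ⟨a, c, u, b, v, d, mema, memc, memu, memb, memv, memd, hua.symm, hab, huc.symm, hbc.symm, hva.symm, had, hvc.symm, hcd, huv, hud, hvb.symm, hbd, (hp ▸ hq ▸ hApq), hAub, hAvd⟩
      · exact hno3 ⟨a, d, u, b, v, c, mema, memd, memu, memb, memv, memc, hua.symm, hab, hud.symm, hbd.symm, hva.symm, hac, hvd.symm, hcd.symm, huv, huc, hvb.symm, hbc, (hp ▸ hq ▸ hApq), hAub, hAvc⟩
      · exact hno3 ⟨b, v, u, a, c, d, memb, memv, memu, mema, memc, memd, hub.symm, hab.symm, huv.symm, hva, hbc, hbd, hvc, hvd, huc, hud, hac, had, (hp ▸ hq ▸ hApq), hAua, hAcd⟩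
      · exact hno3 ⟨b, c, u, a, v, d, memb, memc, memu, mema, memv, memd, hub.symm, hab.symm, huc.symm, hac.symm, hvb.symm, hbd, hvc.symm, hcd, huv, hud, hva.symm, had, (hp ▸ hq ▸ hApq), hAua, hAvd⟩
      · exact hno3 ⟨b, d, u, a, v, c, memb, memd, memu, mema, memv, memc, hub.symm, hab.symm, hud.symm, had.symm, hvb.symm, hbc, hvd.symm, hcd.symm, huv, huc, hva.symm, hac, (hp ▸ hq ▸ hApq), hAua, hAvc⟩
    rcases hms2 with hs | hs | hs | hs | hs | hs
    · exact hno3 ⟨u, d, v, c, a, b, memu, memd, memv, memc, mema, memb, huv, huc, hvd.symm, hcd.symm, hua, hub, had.symm, hbd.symm, hva, hvb, hac.symm, hbc.symm, (hs ▸ hAds2).symm, hAvc, hAab⟩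
    · exact step3 (hs ▸ hAds2).symm
    · exact hno3 ⟨a, d, u, b, v, c, mema, memd, memu, memb, memv, memc, hua.symm, hab, hud.symm, hbd.symm, hva.symm, hac, hvd.symm, hcd.symm, huv, huc, hvb.symm, hbc, (hs ▸ hAds2).symm, hAub, hAvc⟩
    · exact hno3 ⟨b, d, u, a, v, c, memb, memd, memu, mema, memv, memc, hub.symm, hab.symm, hud.symm, had.symm, hvb.symm, hbc, hvd.symm, hcd.symm, huv, huc, hva.symm, hac, (hs ▸ hAds2).symm, hAua, hAvc⟩
    · exact hs2c hs
    · exact hAds2.ne hs.symm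
  rcases hms' with hs | hs | hs | hs | hs | hs
  · exact step2 (hs ▸ hAbs').symm
  · exact hno3 ⟨b, v, u, a, c, d, memb, memv, memu, mema, memc, memd, hub.symm, hab.symm, huv.symm, hva, hbc, hbd, hvc, hvd, huc, hud, hac, had, (hs ▸ hAbs'), hAua, hAcd⟩
  · exact hs'a hs
  · exact hAbs'.ne hs.symm
  · have hxs' : x ≠ c := hs ▸ hxs'
    have hys' : y ≠ c := hs ▸ hys'
    have hAbc : G.Adj b c := hs ▸ hAbs'
    rcases hmx with hx | hx | hx | hx | hx | hx
    · rcases hmy with hy | hy | hy | hy | hy | hy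
      · exact hAxy.ne (hx.trans hy.symm)
      · exact hNuv (hx ▸ hy ▸ hAxy)
      · exact hya hy
      · exact hyb hy
      · exact hys' hy
      · exact hno3 ⟨u, d, v, c, a, b, memu, memd, memv, memc, mema, memb, huv, huc, hvd.symm, hcd.symm, hua, hub, had.symm, hbd.symm, hva, hvb, hac.symm, hbc.symm, (hx ▸ hy ▸ hAxy), hAvc, hAab⟩
    · rcases hmy with hy | hy | hy | hy | hy | hy
      · exact hNuv (hx ▸ hy ▸ hAxy).symm
      · exact hAxy.ne (hx.trans hy.symm)
      · exact hya hy
      · exact hyb hy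
      · exact hys' hy
      · exact hno3 ⟨v, d, b, c, u, a, memv, memd, memb, memc, memu, mema, hvb, hvc, hbd.symm, hcd.symm, huv.symm, hva, hud.symm, had.symm, hub.symm, hab.symm, huc.symm, hac.symm, (hx ▸ hy ▸ hAxy), hAbc, hAua⟩
    · exact hxa hx
    · exact hxb hx
    · exact hxs' hx
    · rcases hmy with hy | hy | hy | hy | hy | hy
      · exact hno3 ⟨u, d, v, c, a, b, memu, memd, memv, memc, mema, memb, huv, huc, hvd.symm, hcd.symm, hua, hub, had.symm, hbd.symm, hva, hvb, hac.symm, hbc.symm, (hx ▸ hy ▸ hAxy).symm, hAvc, hAab⟩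
      · exact hno3 ⟨v, d, b, c, u, a, memv, memd, memb, memc, memu, mema, hvb, hvc, hbd.symm, hcd.symm, huv.symm, hva, hud.symm, had.symm, hub.symm, hab.symm, huc.symm, hac.symm, (hx ▸ hy ▸ hAxy).symm, hAbc, hAua⟩
      · exact hya hy
      · exact hyb hy
      · exact hys' hy
      · exact hAxy.ne (hx.trans hy.symm)
  · exact hno3 ⟨b, d, u, a, v, c, memb, memd, memu, mema, memv, memc, hub.symm, hab.symm, hud.symm, had.symm, hvb.symm, hbc, hvd.symm, hcd.symm, huv, huc, hva.symm, hac, (hs ▸ hAbs'), hAua, hAvc⟩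

end Sat356

namespace Sat356
variable {V : Type*}

lemma kern1 {G : SimpleGraph V} {u v a b c d : V} (huv : u ≠ v) (hua : u ≠ a) (hub : u ≠ b) (huc : u ≠ c) (hud : u ≠ d)
    (hva : v ≠ a) (hvb : v ≠ b) (hvc : v ≠ c) (hvd : v ≠ d) (hab : a ≠ b) (hac : a ≠ c)
    (had : a ≠ d) (hbc : b ≠ c) (hbd : b ≠ d) (hcd : c ≠ d)
    (hAab : G.Adj a b) (hAcd : G.Adj c d) (hNuv : ¬ G.Adj u v)
    (hno3 : NO3 G u v a b c d) (hD2 : D2ALL G u v a b c d)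
    (hCR2 : CR3 G u a b v c d)
    (hNv : ∃ x, mem6 u v a b c d x ∧ G.Adj v x)
    (hAua : G.Adj u a) : False := by
  have memu : mem6 u v a b c d u := Or.inl rfl
  have mema : mem6 u v a b c d a := Or.inr (Or.inr (Or.inl rfl))
  have memc : mem6 u v a b c d c := Or.inr (Or.inr (Or.inr (Or.inr (Or.inl rfl))))
  have memd : mem6 u v a b c d d := Or.inr (Or.inr (Or.inr (Or.inr (Or.inr rfl))))
  obtain ⟨x, hmx, hAvx⟩ := hNv
  rcases hmx with hx | hx | hx | hx | hx | hx
  · exact hNuv (hx ▸ hAvx).symm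
  · exact hAvx.ne hx.symm
  · exact kern_va huv hua hub huc hud hva hvb hvc hvd hab hac had hbc hbd hcd
      hAab hAcd hNuv hno3 hD2 hAua (hx ▸ hAvx)
  · exact hno3 ⟨v, b, u, a, c, d, Or.inr (Or.inl rfl), Or.inr (Or.inr (Or.inr (Or.inl rfl))),
      memu, mema, memc, memd, huv.symm, hva, hub.symm, hab.symm, hvc, hvd, hbc, hbd,
      huc, hud, hac, had, (hx ▸ hAvx), hAua, hAcd⟩
  · exact kern_vc huv hua hub huc hud hva hvb hvc hvd hab hac had hbc hbd hcd
      hAab hAcd hNuv hno3 hD2 hCR2 hAua (hx ▸ hAvx)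
  · exact kern_vc huv hua hub hud huc hva hvb hvd hvc hab had hac hbd hbc hcd.symm
      hAab hAcd.symm hNuv
      (NO3_perm (fun x hx => by unfold mem6 at hx ⊢; tauto) hno3)
      (D2_perm (fun x => by unfold mem6; constructor <;> (intro h; tauto)) hD2)
      (CR3_perm (fun x h => h) (fun x h => by tauto) hCR2)
      hAua (hx ▸ hAvx)

set_option maxHeartbeats 1000000 in
lemma kern0 {G : SimpleGraph V} {u v a b c d : V} (huv : u ≠ v) (hua : u ≠ a) (hub : u ≠ b) (huc : u ≠ c) (hud : u ≠ d)
    (hva : v ≠ a) (hvb : v ≠ b) (hvc : v ≠ c) (hvd : v ≠ d) (hab : a ≠ b) (hac : a ≠ c)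
    (had : a ≠ d) (hbc : b ≠ c) (hbd : b ≠ d) (hcd : c ≠ d)
    (hAab : G.Adj a b) (hAcd : G.Adj c d) (hNuv : ¬ G.Adj u v)
    (hno3 : NO3 G u v a b c d) (hD2 : D2ALL G u v a b c d)
    (hCR1 : CR3 G u c d v a b) (hCR2 : CR3 G u a b v c d)
    (hNu : ∃ x, mem6 u v a b c d x ∧ G.Adj u x)
    (hNv : ∃ x, mem6 u v a b c d x ∧ G.Adj v x) : False := by
  obtain ⟨x, hmx, hAux⟩ := hNu
  have hmemiff : ∀ (u' v' a' b' c' d' : V),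
      (∀ y, mem6 u' v' a' b' c' d' y ↔ mem6 u v a b c d y) →
      (∀ y, mem6 u' v' a' b' c' d' y → mem6 u v a b c d y) := fun _ _ _ _ _ _ h y => (h y).mp
  rcases hmx with hx | hx | hx | hx | hx | hx
  · exact hAux.ne hx.symm
  · exact hNuv (hx ▸ hAux)
  · exact kern1 huv hua hub huc hud hva hvb hvc hvd hab hac had hbc hbd hcd
      hAab hAcd hNuv hno3 hD2 hCR2 hNv (hx ▸ hAux)
  · -- u adj b : swap a ↔ b
    refine kern1 huv hub hua huc hud hvb hva hvc hvd hab.symm hbc hbd hac had hcd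
      hAab.symm hAcd hNuv
      (NO3_perm (fun y hy => by unfold mem6 at hy ⊢; tauto) hno3)
      (D2_perm (fun y => by unfold mem6; constructor <;> (intro h; tauto)) hD2)
      (CR3_perm (fun y h => by tauto) (fun y h => h) hCR2)
      ?_ (hx ▸ hAux)
    · obtain ⟨y, hmy, hA⟩ := hNv
      exact ⟨y, by unfold mem6 at hmy ⊢; tauto, hA⟩
  · -- u adj c : swap pairs (a,b) ↔ (c,d)
    refine kern1 huv huc hud hua hub hvc hvd hva hvb hcd hac.symm hbc.symm had.symm hbd.symm hab
      hAcd hAab hNuv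
      (NO3_perm (fun y hy => by unfold mem6 at hy ⊢; tauto) hno3)
      (D2_perm (fun y => by unfold mem6; constructor <;> (intro h; tauto)) hD2)
      hCR1
      ?_ (hx ▸ hAux)
    · obtain ⟨y, hmy, hA⟩ := hNv
      exact ⟨y, by unfold mem6 at hmy ⊢; tauto, hA⟩
  · -- u adj d : (a,b,c,d) → (d,c,a,b)
    refine kern1 huv hud huc hua hub hvd hvc hva hvb hcd.symm had.symm hbd.symm hac.symm hbc.symm hab
      hAcd.symm hAab hNuv
      (NO3_perm (fun y hy => by unfold mem6 at hy ⊢; tauto) hno3)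
      (D2_perm (fun y => by unfold mem6; constructor <;> (intro h; tauto)) hD2)
      (CR3_perm (fun y h => by tauto) (fun y h => h) hCR1)
      ?_ (hx ▸ hAux)
    · obtain ⟨y, hmy, hA⟩ := hNv
      exact ⟨y, by unfold mem6 at hmy ⊢; tauto, hA⟩

end Sat356

namespace Sat356
variable {V : Type*}

lemma inr_eq {t : ℕ} {i i' : Fin t} {c c' : Fin 2}
    (h : (Sum.inr (i, c) : Wt t) = Sum.inr (i', c')) : i = i' ∧ c = c' := by
  injection h with h'
  exact ⟨congrArg Prod.fst h', congrArg Prod.snd h'⟩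

lemma locate {t : ℕ} {G : SimpleGraph V} {u v : V}
    (hfree : ¬ ContainsCopy (PkPlustP2 7 t) G)
    (f : Wt t → V) (hinj : Function.Injective f)
    (hf : ∀ x y, (PkPlustP2 7 t).Adj x y → (addE G u v).Adj (f x) (f y)) :
    (∃ jx jy : Fin 7, f (Sum.inl jx) = u ∧ f (Sum.inl jy) = v) ∨
    (∃ i₀ : Fin t, (∃ c, f (Sum.inr (i₀, c)) = u) ∧ (∃ c, f (Sum.inr (i₀, c)) = v)) := by
  obtain ⟨x, y, hxy, h1, h2⟩ := newEdge_used hfree f hinj hf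
  rcases x with jx | ⟨ix, cx⟩ <;> rcases y with jy | ⟨iy, cy⟩
  · exact Or.inl ⟨jx, jy, h1, h2⟩
  · exact absurd hxy H_adj_mixed
  · exact absurd hxy H_adj_mixed'
  · obtain ⟨hii, _⟩ := H_pair_of_adj hxy
    subst hii
    exact Or.inr ⟨ix, ⟨cx, h1⟩, ⟨cy, h2⟩⟩

lemma chain_inl {t : ℕ} {G : SimpleGraph V} {u v : V} (f : Wt t → V)
    (hf : ∀ x y, (PkPlustP2 7 t).Adj x y → (addE G u v).Adj (f x) (f y))
    {S : Set V} (hS : ∀ x ∈ S, ∀ y, (addE G u v).Adj x y → y ∈ S)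
    {j₀ : Fin 7} (h₀ : f (Sum.inl j₀) ∈ S) : ∀ j, f (Sum.inl j) ∈ S :=
  chain_mem hS (fun j => f (Sum.inl j)) (fun m hm => hf _ _ (H_adj_succ hm)) j₀ h₀

lemma pigeonC [Fintype V] {t : ℕ} {G : SimpleGraph V} {u v : V} (f : Wt t → V)
    (hinj : Function.Injective f)
    (hf : ∀ x y, (PkPlustP2 7 t).Adj x y → (addE G u v).Adj (f x) (f y))
    {S : Set V} (hS : ∀ x ∈ S, ∀ y, (addE G u v).Adj x y → y ∈ S)
    (hcard : S.ncard ≤ 6) : ∀ j, f (Sum.inl j) ∉ S := by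
  intro j hj
  exact pigeon7 (fun p q h => Sum.inl.inj (hinj h)) (chain_inl f hf hS hj) hcard

lemma image_ne {t : ℕ} {u : V} (f : Wt t → V) (hinj : Function.Injective f)
    (i₀ : Fin t) (hu : ∃ c, f (Sum.inr (i₀, c)) = u) :
    ∀ x : Wt t, (∀ c, x ≠ Sum.inr (i₀, c)) → f x ≠ u := by
  intro x hx h
  obtain ⟨cu, hcu⟩ := hu
  exact hx cu (hinj (h.trans hcu.symm))

lemma pair_edge {t : ℕ} {G : SimpleGraph V} {u v : V} (f : Wt t → V)
    (hinj : Function.Injective f)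
    (hf : ∀ x y, (PkPlustP2 7 t).Adj x y → (addE G u v).Adj (f x) (f y))
    (i₀ : Fin t) (hu : ∃ c, f (Sum.inr (i₀, c)) = u) (hv : ∃ c, f (Sum.inr (i₀, c)) = v)
    {i' : Fin t} (hne : i' ≠ i₀) :
    G.Adj (f (Sum.inr (i', 0))) (f (Sum.inr (i', 1))) := by
  have h := hf _ _ (H_adj_pair i')
  rw [addE_adj] at h
  rcases h with h | ⟨_, ⟨h1, _⟩ | ⟨h1, _⟩⟩
  · exact h
  · obtain ⟨cu, hcu⟩ := hu
    exact absurd (inr_eq (hinj (h1.trans hcu.symm))).1 hne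
  · obtain ⟨cv, hcv⟩ := hv
    exact absurd (inr_eq (hinj (h1.trans hcv.symm))).1 hne

lemma third_vertex {b c d P Q : V} (hP : P = b ∨ P = c ∨ P = d) (hQ : Q = b ∨ Q = c ∨ Q = d)
    (hPQ : P ≠ Q) (hbc : b ≠ c) (hbd : b ≠ d) (hcd : c ≠ d) :
    ∃ x, (x = b ∨ x = c ∨ x = d) ∧ x ≠ P ∧ x ≠ Q := by
  by_cases h1 : b ≠ P ∧ b ≠ Q
  · exact ⟨b, Or.inl rfl, h1.1, h1.2⟩
  by_cases h2 : c ≠ P ∧ c ≠ Q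
  · exact ⟨c, Or.inr (Or.inl rfl), h2.1, h2.2⟩
  by_cases h3 : d ≠ P ∧ d ≠ Q
  · exact ⟨d, Or.inr (Or.inr rfl), h3.1, h3.2⟩
  exfalso
  push_neg at h1 h2 h3
  have hb : b = P ∨ b = Q := by
    by_cases h : b = P
    · exact Or.inl h
    · exact Or.inr (h1 h)
  have hc : c = P ∨ c = Q := by
    by_cases h : c = P
    · exact Or.inl h
    · exact Or.inr (h2 h)
  have hd : d = P ∨ d = Q := by
    by_cases h : d = P
    · exact Or.inl h
    · exact Or.inr (h3 h)
  rcases hb with hb | hb <;> rcases hc with hc | hc <;> rcases hd with hd | hd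
  · exact hbc (hb.trans hc.symm)
  · exact hbc (hb.trans hc.symm)
  · exact hbd (hb.trans hd.symm)
  · exact hcd (hc.trans hd.symm)
  · exact hcd (hc.trans hd.symm)
  · exact hbd (hb.trans hd.symm)
  · exact hbc (hb.trans hc.symm)
  · exact hbc (hb.trans hc.symm)

lemma ncard3_le {b c d : V} : ({b, c, d} : Set V).ncard ≤ 3 := by
  have h1 := Set.ncard_insert_le b ({c, d} : Set V)
  have h2 := Set.ncard_insert_le c ({d} : Set V)
  have h3 := Set.ncard_singleton d
  omega

end Sat356

namespace Sat356
variable {V : Type*} [Fintype V]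

lemma comp_no_K2 {t : ℕ} {G : SimpleGraph V} (hsat : IsSaturated (PkPlustP2 7 t) G)
    {w₁ : V} (h1 : G.neighborSet w₁ = ∅) {C : G.ConnectedComponent} {a b : V}
    (ha : a ∈ C.supp) (hb : b ∈ C.supp) (hAab : G.Adj a b)
    (hsupp : ∀ y ∈ C.supp, y = a ∨ y = b) : False := by
  have hne_ab : a ≠ b := hAab.ne
  have haw : a ≠ w₁ := fun h => isolated_not_adj h1 b (h ▸ hAab).symm
  have hbw : b ≠ w₁ := fun h => isolated_not_adj h1 a (h ▸ hAab.symm).symm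
  have hnadj : ¬ G.Adj a w₁ := isolated_not_adj h1 a
  obtain ⟨f, hinj, hf⟩ := sat_copy hsat haw hnadj
  set S : Set V := {a, b, w₁} with hSdef
  have haS : a ∈ S := Or.inl rfl
  have hSclosed : ∀ x ∈ S, ∀ y, (addE G a w₁).Adj x y → y ∈ S := by
    intro x hx y hxy
    rw [addE_adj] at hxy
    rcases hxy with h | ⟨_, ⟨rfl, rfl⟩ | ⟨rfl, rfl⟩⟩
    · rcases hx with rfl | rfl | rfl
      · rcases hsupp y (supp_closed C ha h) with rfl | rfl
        · exact Or.inl rfl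
        · exact Or.inr (Or.inl rfl)
      · rcases hsupp y (supp_closed C hb h) with rfl | rfl
        · exact Or.inl rfl
        · exact Or.inr (Or.inl rfl)
      · exact absurd h.symm (isolated_not_adj h1 y)
    · exact Or.inr (Or.inr rfl)
    · exact Or.inl rfl
  have hcardS : S.ncard ≤ 6 := by
    rw [hSdef]
    have h1' := Set.ncard_insert_le a ({b, w₁} : Set V)
    have h2' := Set.ncard_insert_le b ({w₁} : Set V)
    have h3' := Set.ncard_singleton w₁
    omega
  have hnoinl := pigeonC f hinj hf hSclosed hcardS
  rcases locate hsat.1 f hinj hf with ⟨jx, _, hx, _⟩ | ⟨i₀, hu, hv⟩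
  · exact hnoinl jx (by rw [hx]; exact haS)
  · -- the pair i₀ is mapped onto {a, w₁}; no other vertex of the copy can be in C.supp
    have hclaim : ∀ x : Wt t, (∀ c, x ≠ Sum.inr (i₀, c)) → f x ∉ C.supp := by
      intro x hx hmem
      rcases x with j | ⟨i', c⟩
      · refine hnoinl j ?_
        rcases hsupp _ hmem with h | h
        · rw [h]; exact Or.inl rfl
        · rw [h]; exact Or.inr (Or.inl rfl)
      · have hi' : i' ≠ i₀ := fun h => hx c (by rw [h])
        rcases hsupp _ hmem with h | h
        · exact image_ne f hinj i₀ hu _ hx h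
        · -- f (inr (i', c)) = b ; look at the partner
          have hpe := pair_edge f hinj hf i₀ hu hv hi'
          have hc2 : (0 : Fin 2) ≠ 1 := by decide
          -- partner vertex
          rcases (by fin_cases c <;> simp : c = 0 ∨ c = 1) with rfl | rfl
          · have hp : f (Sum.inr (i', 1)) ∈ C.supp := supp_closed C hmem hpe
            rcases hsupp _ hp with h' | h'
            · exact image_ne f hinj i₀ hu (Sum.inr (i', 1))
                (fun c' he => hi' (inr_eq he).1) h'
            · exact hpe.ne (h.trans h'.symm)
          · have hp : f (Sum.inr (i', 0)) ∈ C.supp := supp_closed C hmem hpe.symm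
            rcases hsupp _ hp with h' | h'
            · exact image_ne f hinj i₀ hu (Sum.inr (i', 0))
                (fun c' he => hi' (inr_eq he).1) h'
            · exact hpe.ne (h'.trans h.symm)
    refine hsat.1 (reroute f hinj hf i₀ hu hv (fun i => i = i₀) rfl (fun _ => (a, b))
      (fun i _ => hAab) (fun i j hi hj hij => absurd (hi.trans hj.symm) hij) ?_)
    intro x hx i' _
    have hx' : ∀ c, x ≠ Sum.inr (i₀, c) := fun c => hx i₀ c rfl
    exact ⟨image_ne f hinj i₀ hu x hx', fun h => hclaim x hx' (h ▸ hb)⟩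

end Sat356

namespace Sat356
variable {V : Type*} [Fintype V]

lemma comp_no_K4 {t : ℕ} {G : SimpleGraph V} (hsat : IsSaturated (PkPlustP2 7 t) G)
    {w₁ : V} (h1 : G.neighborSet w₁ = ∅) {C : G.ConnectedComponent} {a b c d : V}
    (ha : a ∈ C.supp) (hb : b ∈ C.supp) (hc : c ∈ C.supp) (hd : d ∈ C.supp)
    (hAab : G.Adj a b) (hAac : G.Adj a c) (hAad : G.Adj a d)
    (hAbc : G.Adj b c) (hAbd : G.Adj b d) (hAcd : G.Adj c d)
    (hsupp : ∀ y ∈ C.supp, y = a ∨ y = b ∨ y = c ∨ y = d) : False := by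
  have haw : a ≠ w₁ := fun h => isolated_not_adj h1 b (h ▸ hAab).symm
  have hnadj : ¬ G.Adj a w₁ := isolated_not_adj h1 a
  obtain ⟨f, hinj, hf⟩ := sat_copy hsat haw hnadj
  set S : Set V := {a, b, c, d, w₁} with hSdef
  have haS : a ∈ S := Or.inl rfl
  have hsuppS : ∀ y ∈ C.supp, y ∈ S := by
    intro y hy
    rcases hsupp y hy with rfl | rfl | rfl | rfl
    · exact Or.inl rfl
    · exact Or.inr (Or.inl rfl)
    · exact Or.inr (Or.inr (Or.inl rfl))
    · exact Or.inr (Or.inr (Or.inr (Or.inl rfl)))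
  have hSclosed : ∀ x ∈ S, ∀ y, (addE G a w₁).Adj x y → y ∈ S := by
    intro x hx y hxy
    rw [addE_adj] at hxy
    rcases hxy with h | ⟨_, ⟨rfl, rfl⟩ | ⟨rfl, rfl⟩⟩
    · rcases hx with rfl | rfl | rfl | rfl | rfl
      · exact hsuppS y (supp_closed C ha h)
      · exact hsuppS y (supp_closed C hb h)
      · exact hsuppS y (supp_closed C hc h)
      · exact hsuppS y (supp_closed C hd h)
      · exact absurd h.symm (isolated_not_adj h1 y)
    · exact Or.inr (Or.inr (Or.inr (Or.inr rfl)))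
    · exact Or.inl rfl
  have hcardS : S.ncard ≤ 6 := by
    rw [hSdef]
    have h1' := Set.ncard_insert_le a ({b, c, d, w₁} : Set V)
    have h2' := Set.ncard_insert_le b ({c, d, w₁} : Set V)
    have h3' := Set.ncard_insert_le c ({d, w₁} : Set V)
    have h4' := Set.ncard_insert_le d ({w₁} : Set V)
    have h5' := Set.ncard_singleton w₁
    omega
  have hnoinl := pigeonC f hinj hf hSclosed hcardS
  rcases locate hsat.1 f hinj hf with ⟨jx, _, hx, _⟩ | ⟨i₀, hu, hv⟩
  · exact hnoinl jx (by rw [hx]; exact haS)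
  · have hmem_bcd : ∀ (i' : Fin t) (cc : Fin 2), i' ≠ i₀ → f (Sum.inr (i', cc)) ∈ C.supp →
        f (Sum.inr (i', cc)) = b ∨ f (Sum.inr (i', cc)) = c ∨ f (Sum.inr (i', cc)) = d := by
      intro i' cc hi' hmem
      rcases hsupp _ hmem with h | h | h | h
      · exact absurd h (image_ne f hinj i₀ hu _ (fun c' he => hi' (inr_eq he).1))
      · exact Or.inl h
      · exact Or.inr (Or.inl h)
      · exact Or.inr (Or.inr h)
    have hpartner : ∀ (i' : Fin t) (cc : Fin 2), i' ≠ i₀ → f (Sum.inr (i', cc)) ∈ C.supp →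
        ∀ cc', f (Sum.inr (i', cc')) ∈ C.supp := by
      intro i' cc hi' hmem cc'
      have hpe := pair_edge f hinj hf i₀ hu hv hi'
      rcases (by fin_cases cc <;> simp : cc = 0 ∨ cc = 1) with rfl | rfl <;>
        rcases (by fin_cases cc' <;> simp : cc' = 0 ∨ cc' = 1) with rfl | rfl
      · exact hmem
      · exact supp_closed C hmem hpe
      · exact supp_closed C hmem hpe.symm
      · exact hmem
    by_cases hL : ∃ i₁, i₁ ≠ i₀ ∧ f (Sum.inr (i₁, 0)) ∈ C.supp
    · obtain ⟨i₁, hi₁, hi₁supp⟩ := hL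
      have hp1supp : f (Sum.inr (i₁, (0 : Fin 2))) ∈ C.supp := hi₁supp
      have hq1supp : f (Sum.inr (i₁, (1 : Fin 2))) ∈ C.supp := hpartner i₁ 0 hi₁ hi₁supp 1
      have hPQadj := pair_edge f hinj hf i₀ hu hv hi₁
      have hPm := hmem_bcd i₁ 0 hi₁ hp1supp
      have hQm := hmem_bcd i₁ 1 hi₁ hq1supp
      have hsecond : ∀ i₂ : Fin t, i₂ ≠ i₀ → (∃ cc, f (Sum.inr (i₂, cc)) ∈ C.supp) → i₂ = i₁ := by
        intro i₂ hi₂ ⟨cc, hccsupp⟩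
        by_contra hne12
        have h20 : f (Sum.inr (i₂, (0 : Fin 2))) ∈ C.supp := hpartner i₂ cc hi₂ hccsupp 0
        have h21 : f (Sum.inr (i₂, (1 : Fin 2))) ∈ C.supp := hpartner i₂ cc hi₂ hccsupp 1
        have m1 := hmem_bcd i₁ 0 hi₁ hp1supp
        have m2 := hmem_bcd i₁ 1 hi₁ hq1supp
        have m3 := hmem_bcd i₂ 0 hi₂ h20
        have m4 := hmem_bcd i₂ 1 hi₂ h21
        have hT : ∀ y : V, (y = b ∨ y = c ∨ y = d) → y ∈ ({b, c, d} : Set V) := by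
          intro y hy
          rcases hy with rfl | rfl | rfl
          · exact Or.inl rfl
          · exact Or.inr (Or.inl rfl)
          · exact Or.inr (Or.inr rfl)
        have d01 : (0 : Fin 2) ≠ 1 := by decide
        refine pigeon4 (hT _ m1) (hT _ m2) (hT _ m3) (hT _ m4) ?_ ?_ ?_ ?_ ?_ ?_ ncard3_le
        · exact fun h => d01 (inr_eq (hinj h)).2
        · exact fun h => hne12 ((inr_eq (hinj h)).1).symm
        · exact fun h => hne12 ((inr_eq (hinj h)).1).symm
        · exact fun h => hne12 ((inr_eq (hinj h)).1).symm
        · exact fun h => hne12 ((inr_eq (hinj h)).1).symm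
        · exact fun h => d01 (inr_eq (hinj h)).2
      obtain ⟨xx, hxm, hxP, hxQ⟩ := third_vertex hPm hQm hPQadj.ne hAbc.ne hAbd.ne hAcd.ne
      have hAax : G.Adj a xx := by
        rcases hxm with h | h | h
        · exact h.symm ▸ hAab
        · exact h.symm ▸ hAac
        · exact h.symm ▸ hAad
      have hane : ∀ y : V, (y = b ∨ y = c ∨ y = d) → a ≠ y := by
        intro y hy
        rcases hy with rfl | rfl | rfl
        · exact hAab.ne
        · exact hAac.ne
        · exact hAad.ne
      have hxxsupp : xx ∈ C.supp := by
        rcases hxm with rfl | rfl | rfl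
        · exact hb
        · exact hc
        · exact hd
      have hnotin : ∀ x' : Wt t, (∀ i cc, (i = i₀ ∨ i = i₁) → x' ≠ Sum.inr (i, cc)) →
          f x' ∉ C.supp := by
        intro x' hx' hmem
        rcases x' with j | ⟨i', cc⟩
        · exact hnoinl j (hsuppS _ hmem)
        · have hi'0 : i' ≠ i₀ := fun h => hx' i₀ cc (Or.inl rfl) (by rw [h])
          have hi'1 : i' ≠ i₁ := fun h => hx' i₁ cc (Or.inr rfl) (by rw [h])
          exact hi'1 (hsecond i' hi'0 ⟨cc, hmem⟩)
      refine hsat.1 (reroute f hinj hf i₀ hu hv (fun i => i = i₀ ∨ i = i₁) (Or.inl rfl)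
        (fun i => if i = i₀ then (a, xx) else
          (f (Sum.inr (i₁, 0)), f (Sum.inr (i₁, 1)))) ?_ ?_ ?_)
      · intro i hi
        beta_reduce
        rcases hi with rfl | rfl
        · rw [if_pos rfl]; exact hAax
        · rw [if_neg hi₁]; exact hPQadj
      · intro i j hi hj hij
        beta_reduce
        rcases hi with rfl | rfl <;> rcases hj with rfl | rfl
        · exact absurd rfl hij
        · rw [if_pos rfl, if_neg hi₁]
          exact ⟨hane _ hPm, hane _ hQm, hxP, hxQ⟩
        · rw [if_pos rfl, if_neg hi₁]
          exact ⟨(hane _ hPm).symm, hxP.symm, (hane _ hQm).symm, hxQ.symm⟩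
        · exact absurd rfl hij
      · intro x' hx' i hi
        beta_reduce
        have hnot := hnotin x' (fun i cc hicc he => hx' i cc hicc he)
        rcases hi with rfl | rfl
        · rw [if_pos rfl]
          exact ⟨fun h => hnot (h ▸ ha), fun h => hnot (h ▸ hxxsupp)⟩
        · rw [if_neg hi₁]
          exact ⟨fun h => hnot (h ▸ hp1supp), fun h => hnot (h ▸ hq1supp)⟩
    · push_neg at hL
      have hnotin : ∀ x' : Wt t, (∀ cc, x' ≠ Sum.inr (i₀, cc)) → f x' ∉ C.supp := by
        intro x' hx' hmem
        rcases x' with j | ⟨i', cc⟩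
        · exact hnoinl j (hsuppS _ hmem)
        · have hi'0 : i' ≠ i₀ := fun h => hx' cc (by rw [h])
          exact hL i' hi'0 (hpartner i' cc hi'0 hmem 0)
      refine hsat.1 (reroute f hinj hf i₀ hu hv (fun i => i = i₀) rfl (fun _ => (a, b))
        (fun i _ => hAab) (fun i j hi hj hij => absurd (hi.trans hj.symm) hij) ?_)
      intro x' hx' i' _
      have hx'' : ∀ cc, x' ≠ Sum.inr (i₀, cc) := fun cc => hx' i₀ cc rfl
      exact ⟨fun h => hnotin x' hx'' (h ▸ ha), fun h => hnotin x' hx'' (h ▸ hb)⟩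

end Sat356

namespace Sat356
variable {V : Type*} [Fintype V]

lemma hpartner_gen {t : ℕ} {G : SimpleGraph V} {u v : V} (f : Wt t → V)
    (hinj : Function.Injective f)
    (hf : ∀ x y, (PkPlustP2 7 t).Adj x y → (addE G u v).Adj (f x) (f y))
    (i₀ : Fin t) (hu0 : ∃ c, f (Sum.inr (i₀, c)) = u) (hv0 : ∃ c, f (Sum.inr (i₀, c)) = v)
    {C : G.ConnectedComponent} :
    ∀ (i' : Fin t) (cc : Fin 2), i' ≠ i₀ → f (Sum.inr (i', cc)) ∈ C.supp →
      ∀ cc', f (Sum.inr (i', cc')) ∈ C.supp := by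
  intro i' cc hi' hmem cc'
  have hpe := pair_edge f hinj hf i₀ hu0 hv0 hi'
  rcases (by fin_cases cc <;> simp : cc = 0 ∨ cc = 1) with rfl | rfl <;>
    rcases (by fin_cases cc' <;> simp : cc' = 0 ∨ cc' = 1) with rfl | rfl
  · exact hmem
  · exact supp_closed C hmem hpe
  · exact supp_closed C hmem hpe.symm
  · exact hmem

lemma win_single {t : ℕ} {G : SimpleGraph V} {u v : V}
    (hfree : ¬ ContainsCopy (PkPlustP2 7 t) G) (f : Wt t → V)
    (hinj : Function.Injective f)
    (hf : ∀ x y, (PkPlustP2 7 t).Adj x y → (addE G u v).Adj (f x) (f y))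
    (i₀ : Fin t) (hu0 : ∃ c, f (Sum.inr (i₀, c)) = u) (hv0 : ∃ c, f (Sum.inr (i₀, c)) = v)
    {C : G.ConnectedComponent} {e1 e2 : V} (hAe : G.Adj e1 e2)
    (he1 : e1 ∈ C.supp) (he2 : e2 ∈ C.supp)
    (hnomem : ∀ x : Wt t, (∀ c, x ≠ Sum.inr (i₀, c)) → f x ∉ C.supp) : False := by
  refine hfree (reroute f hinj hf i₀ hu0 hv0 (fun i => i = i₀) rfl (fun _ => (e1, e2))
    (fun i _ => hAe) (fun i j hi hj hij => absurd (hi.trans hj.symm) hij) ?_)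
  intro x hx i' _
  have hx' : ∀ c, x ≠ Sum.inr (i₀, c) := fun c => hx i₀ c rfl
  exact ⟨fun h => hnomem x hx' (h ▸ he1), fun h => hnomem x hx' (h ▸ he2)⟩

lemma win_double {t : ℕ} {G : SimpleGraph V} {u v : V}
    (hfree : ¬ ContainsCopy (PkPlustP2 7 t) G) (f : Wt t → V)
    (hinj : Function.Injective f)
    (hf : ∀ x y, (PkPlustP2 7 t).Adj x y → (addE G u v).Adj (f x) (f y))
    (i₀ : Fin t) (hu0 : ∃ c, f (Sum.inr (i₀, c)) = u) (hv0 : ∃ c, f (Sum.inr (i₀, c)) = v)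
    (i₁ : Fin t) (hi₁0 : i₁ ≠ i₀)
    {C : G.ConnectedComponent} {e1 e2 e3 e4 : V}
    (hA12 : G.Adj e1 e2) (hA34 : G.Adj e3 e4)
    (he1 : e1 ∈ C.supp) (he2 : e2 ∈ C.supp) (he3 : e3 ∈ C.supp) (he4 : e4 ∈ C.supp)
    (h13 : e1 ≠ e3) (h14 : e1 ≠ e4) (h23 : e2 ≠ e3) (h24 : e2 ≠ e4)
    (hnomem : ∀ x : Wt t, (∀ c, x ≠ Sum.inr (i₀, c)) → (∀ c, x ≠ Sum.inr (i₁, c)) →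
      f x ∉ C.supp) : False := by
  refine hfree (reroute f hinj hf i₀ hu0 hv0 (fun i => i = i₀ ∨ i = i₁) (Or.inl rfl)
    (fun i => if i = i₀ then (e1, e2) else (e3, e4)) ?_ ?_ ?_)
  · intro i hi
    beta_reduce
    rcases hi with rfl | rfl
    · rw [if_pos rfl]; exact hA12
    · rw [if_neg hi₁0]; exact hA34
  · intro i j hi hj hij
    beta_reduce
    rcases hi with rfl | rfl <;> rcases hj with rfl | rfl
    · exact absurd rfl hij
    · rw [if_pos rfl, if_neg hi₁0]
      exact ⟨h13, h14, h23, h24⟩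
    · rw [if_pos rfl, if_neg hi₁0]
      exact ⟨h13.symm, h23.symm, h14.symm, h24.symm⟩
    · exact absurd rfl hij
  · intro x hx i hi
    beta_reduce
    have hx0 : ∀ c, x ≠ Sum.inr (i₀, c) := fun c => hx i₀ c (Or.inl rfl)
    have hx1 : ∀ c, x ≠ Sum.inr (i₁, c) := fun c => hx i₁ c (Or.inr rfl)
    have hnot := hnomem x hx0 hx1
    rcases hi with rfl | rfl
    · rw [if_pos rfl]
      exact ⟨fun h => hnot (h ▸ he1), fun h => hnot (h ▸ he2)⟩
    · rw [if_neg hi₁0]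
      exact ⟨fun h => hnot (h ▸ he3), fun h => hnot (h ▸ he4)⟩

lemma win_triple {t : ℕ} {G : SimpleGraph V} {u v : V}
    (hfree : ¬ ContainsCopy (PkPlustP2 7 t) G) (f : Wt t → V)
    (hinj : Function.Injective f)
    (hf : ∀ x y, (PkPlustP2 7 t).Adj x y → (addE G u v).Adj (f x) (f y))
    (i₀ : Fin t) (hu0 : ∃ c, f (Sum.inr (i₀, c)) = u) (hv0 : ∃ c, f (Sum.inr (i₀, c)) = v)
    (i₁ i₂ : Fin t) (hi₁0 : i₁ ≠ i₀) (hi₂0 : i₂ ≠ i₀) (hi₁₂ : i₁ ≠ i₂)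
    {C : G.ConnectedComponent} {e1 e2 e3 e4 e5 e6 : V}
    (hA12 : G.Adj e1 e2) (hA34 : G.Adj e3 e4) (hA56 : G.Adj e5 e6)
    (he1 : e1 ∈ C.supp) (he2 : e2 ∈ C.supp) (he3 : e3 ∈ C.supp) (he4 : e4 ∈ C.supp)
    (he5 : e5 ∈ C.supp) (he6 : e6 ∈ C.supp)
    (h13 : e1 ≠ e3) (h14 : e1 ≠ e4) (h23 : e2 ≠ e3) (h24 : e2 ≠ e4)
    (h15 : e1 ≠ e5) (h16 : e1 ≠ e6) (h25 : e2 ≠ e5) (h26 : e2 ≠ e6)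
    (h35 : e3 ≠ e5) (h36 : e3 ≠ e6) (h45 : e4 ≠ e5) (h46 : e4 ≠ e6)
    (hnomem : ∀ x : Wt t, (∀ c, x ≠ Sum.inr (i₀, c)) → (∀ c, x ≠ Sum.inr (i₁, c)) →
      (∀ c, x ≠ Sum.inr (i₂, c)) → f x ∉ C.supp) : False := by
  classical
  refine hfree (reroute f hinj hf i₀ hu0 hv0 (fun i => i = i₀ ∨ i = i₁ ∨ i = i₂) (Or.inl rfl)
    (fun i => if i = i₀ then (e1, e2) else if i = i₁ then (e3, e4) else (e5, e6)) ?_ ?_ ?_)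
  · intro i hi
    beta_reduce
    rcases hi with rfl | rfl | rfl
    · rw [if_pos rfl]; exact hA12
    · rw [if_neg hi₁0, if_pos rfl]; exact hA34
    · rw [if_neg hi₂0, if_neg (Ne.symm hi₁₂)]; exact hA56
  · intro i j hi hj hij
    beta_reduce
    rcases hi with rfl | rfl | rfl <;> rcases hj with rfl | rfl | rfl <;>
      first
        | exact absurd rfl hij
        | (rw [if_pos rfl, if_neg hi₁0, if_pos rfl]; exact ⟨h13, h14, h23, h24⟩)
        | (rw [if_pos rfl, if_neg hi₂0, if_neg (Ne.symm hi₁₂)]; exact ⟨h15, h16, h25, h26⟩)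
        | (rw [if_neg hi₁0, if_pos rfl, if_pos rfl]; exact ⟨h13.symm, h23.symm, h14.symm, h24.symm⟩)
        | (rw [if_neg hi₁0, if_pos rfl, if_neg hi₂0, if_neg (Ne.symm hi₁₂)];
            exact ⟨h35, h36, h45, h46⟩)
        | (rw [if_neg hi₂0, if_neg (Ne.symm hi₁₂), if_pos rfl];
            exact ⟨h15.symm, h25.symm, h16.symm, h26.symm⟩)
        | (rw [if_neg hi₂0, if_neg (Ne.symm hi₁₂), if_neg hi₁0, if_pos rfl];
            exact ⟨h35.symm, h45.symm, h36.symm, h46.symm⟩)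
  · intro x hx i hi
    beta_reduce
    have hx0 : ∀ c, x ≠ Sum.inr (i₀, c) := fun c => hx i₀ c (Or.inl rfl)
    have hx1 : ∀ c, x ≠ Sum.inr (i₁, c) := fun c => hx i₁ c (Or.inr (Or.inl rfl))
    have hx2 : ∀ c, x ≠ Sum.inr (i₂, c) := fun c => hx i₂ c (Or.inr (Or.inr rfl))
    have hnot := hnomem x hx0 hx1 hx2
    rcases hi with rfl | rfl | rfl
    · rw [if_pos rfl]
      exact ⟨fun h => hnot (h ▸ he1), fun h => hnot (h ▸ he2)⟩
    · rw [if_neg hi₁0, if_pos rfl]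
      exact ⟨fun h => hnot (h ▸ he3), fun h => hnot (h ▸ he4)⟩
    · rw [if_neg hi₂0, if_neg (Ne.symm hi₁₂)]
      exact ⟨fun h => hnot (h ▸ he5), fun h => hnot (h ▸ he6)⟩

end Sat356

namespace Sat356
variable {V : Type*} [Fintype V]

lemma star_case {t : ℕ} {G : SimpleGraph V} (hsat : IsSaturated (PkPlustP2 7 t) G)
    {w₁ : V} (hiso : G.neighborSet w₁ = ∅) {C : G.ConnectedComponent} {z zn : V}
    (hz : z ∈ C.supp) (hAz : G.Adj z zn) (hznsupp : zn ∈ C.supp)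
    (hstar : ∀ x y, x ∈ C.supp → y ∈ C.supp → G.Adj x y → z = x ∨ z = y)
    (hcard : C.supp.ncard ≤ 6) : False := by
  classical
  have hw₁ : w₁ ∉ C.supp := isolated_not_mem_supp hiso hz hznsupp hAz.ne
  have hzw : z ≠ w₁ := fun h => hw₁ (h ▸ hz)
  have hnadj : ¬ G.Adj z w₁ := isolated_not_adj hiso z
  obtain ⟨f, hinj, hf⟩ := sat_copy hsat hzw hnadj
  set S : Set V := insert w₁ C.supp with hSdef
  have hSclosed : ∀ x ∈ S, ∀ y, (addE G z w₁).Adj x y → y ∈ S := by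
    intro x hx y hxy
    rw [addE_adj] at hxy
    rcases hxy with h | ⟨_, ⟨rfl, rfl⟩ | ⟨rfl, rfl⟩⟩
    · rcases hx with rfl | hx
      · exact absurd h.symm (isolated_not_adj hiso y)
      · exact Or.inr (supp_closed C hx h)
    · exact Or.inl rfl
    · exact Or.inr hz
  have hcardS : S.ncard ≤ 7 := by
    rw [hSdef, Set.ncard_insert_of_notMem hw₁ C.supp.toFinite]
    omega
  set g : Fin 7 → V := fun m => f (Sum.inl m) with hgdef
  have hginj : ∀ m m' : Fin 7, g m = g m' → m = m' := fun m m' h => Sum.inl.inj (hinj h)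
  have hadjg : ∀ m : ℕ, (hm : m < 6) →
      (addE G z w₁).Adj (g ⟨m, by omega⟩) (g ⟨m + 1, by omega⟩) :=
    fun m hm => hf _ _ (H_adj_succ hm)
  rcases locate hsat.1 f hinj hf with ⟨jx, jy, hjx, hjy⟩ | ⟨i₀, hu0, hv0⟩
  · -- P7 case: Hamiltonian path structure
    have hallS : ∀ j, g j ∈ S := chain_inl f hf hSclosed (j₀ := jx) (by rw [hjx]; exact Or.inr hz)
    have hsuppg : ∀ j : Fin 7, j ≠ jy → g j ∈ C.supp := by
      intro j hj
      rcases hallS j with h | h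
      · exact absurd (hginj j jy (h.trans hjy.symm)) hj
      · exact h
    have hforce : ∀ m : Fin 7, m ≠ jy → (addE G z w₁).Adj (g m) w₁ → g m = z := by
      intro m hm hadj
      rw [addE_adj] at hadj
      rcases hadj with h | ⟨_, ⟨h1, h2⟩ | ⟨h1, h2⟩⟩
      · exact absurd h (isolated_not_adj hiso _)
      · exact h1
      · exact absurd (hginj m jy (h1.trans hjy.symm)) hm
    have hGedge : ∀ m : ℕ, (hm : m < 6) → m ≠ jy.val → m + 1 ≠ jy.val →
        G.Adj (g ⟨m, by omega⟩) (g ⟨m + 1, by omega⟩) := by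
      intro m hm hm1 hm2
      have h := hadjg m hm
      rw [addE_adj] at h
      rcases h with h | ⟨_, ⟨h1, h2⟩ | ⟨h1, h2⟩⟩
      · exact h
      · exact absurd (congrArg Fin.val (hginj _ jy (h2.trans hjy.symm))) hm2
      · exact absurd (congrArg Fin.val (hginj _ jy (h1.trans hjy.symm))) hm1
    -- w₁ is an endpoint; get a G-edge among interior vertices avoiding z, contradict hstar
    have hjyg : g jy = w₁ := hjy
    have hcast : ∀ {x y y' : V}, (addE G z w₁).Adj x y → y = y' → (addE G z w₁).Adj x y' :=
      fun h e => e ▸ h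
    rcases (by omega : jy.val = 0 ∨ jy.val = 1 ∨ jy.val = 2 ∨ jy.val = 3 ∨ jy.val = 4 ∨
      jy.val = 5 ∨ jy.val = 6) with h | h | h | h | h | h | h
    · obtain rfl : jy = ⟨0, by decide⟩ := Fin.ext h
      have hz1 : g ⟨1, by decide⟩ = z :=
        hforce ⟨1, by decide⟩ (by decide) (hcast (hadjg 0 (by omega)).symm hjyg)
      have h34 : G.Adj (g ⟨3, by omega⟩) (g ⟨4, by omega⟩) :=
        hGedge 3 (by decide) (by decide) (by decide)
      rcases hstar _ _ (hsuppg ⟨3, by decide⟩ (by decide)) (hsuppg ⟨4, by decide⟩ (by decide)) h34 with hh | hh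
      · exact absurd (hginj ⟨1, by decide⟩ ⟨3, by decide⟩ (hz1.trans hh)) (by decide)
      · exact absurd (hginj ⟨1, by decide⟩ ⟨4, by decide⟩ (hz1.trans hh)) (by decide)
    · obtain rfl : jy = ⟨1, by decide⟩ := Fin.ext h
      have hza : g ⟨0, by decide⟩ = z :=
        hforce ⟨0, by decide⟩ (by decide) (hcast (hadjg 0 (by omega)) hjyg)
      have hzb : g ⟨2, by decide⟩ = z :=
        hforce ⟨2, by decide⟩ (by decide) (hcast (hadjg 1 (by omega)).symm hjyg)
      exact absurd (hginj ⟨0, by decide⟩ ⟨2, by decide⟩ (hza.trans hzb.symm)) (by decide)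
    · obtain rfl : jy = ⟨2, by decide⟩ := Fin.ext h
      have hza : g ⟨1, by decide⟩ = z :=
        hforce ⟨1, by decide⟩ (by decide) (hcast (hadjg 1 (by omega)) hjyg)
      have hzb : g ⟨3, by decide⟩ = z :=
        hforce ⟨3, by decide⟩ (by decide) (hcast (hadjg 2 (by omega)).symm hjyg)
      exact absurd (hginj ⟨1, by decide⟩ ⟨3, by decide⟩ (hza.trans hzb.symm)) (by decide)
    · obtain rfl : jy = ⟨3, by decide⟩ := Fin.ext h
      have hza : g ⟨2, by decide⟩ = z :=
        hforce ⟨2, by decide⟩ (by decide) (hcast (hadjg 2 (by omega)) hjyg)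
      have hzb : g ⟨4, by decide⟩ = z :=
        hforce ⟨4, by decide⟩ (by decide) (hcast (hadjg 3 (by omega)).symm hjyg)
      exact absurd (hginj ⟨2, by decide⟩ ⟨4, by decide⟩ (hza.trans hzb.symm)) (by decide)
    · obtain rfl : jy = ⟨4, by decide⟩ := Fin.ext h
      have hza : g ⟨3, by decide⟩ = z :=
        hforce ⟨3, by decide⟩ (by decide) (hcast (hadjg 3 (by omega)) hjyg)
      have hzb : g ⟨5, by decide⟩ = z :=
        hforce ⟨5, by decide⟩ (by decide) (hcast (hadjg 4 (by omega)).symm hjyg)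
      exact absurd (hginj ⟨3, by decide⟩ ⟨5, by decide⟩ (hza.trans hzb.symm)) (by decide)
    · obtain rfl : jy = ⟨5, by decide⟩ := Fin.ext h
      have hza : g ⟨4, by decide⟩ = z :=
        hforce ⟨4, by decide⟩ (by decide) (hcast (hadjg 4 (by omega)) hjyg)
      have hzb : g ⟨6, by decide⟩ = z :=
        hforce ⟨6, by decide⟩ (by decide) (hcast (hadjg 5 (by omega)).symm hjyg)
      exact absurd (hginj ⟨4, by decide⟩ ⟨6, by decide⟩ (hza.trans hzb.symm)) (by decide)
    · obtain rfl : jy = ⟨6, by decide⟩ := Fin.ext h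
      have hz5 : g ⟨5, by decide⟩ = z :=
        hforce ⟨5, by decide⟩ (by decide) (hcast (hadjg 5 (by omega)) hjyg)
      have h23 : G.Adj (g ⟨2, by omega⟩) (g ⟨3, by omega⟩) :=
        hGedge 2 (by decide) (by decide) (by decide)
      rcases hstar _ _ (hsuppg ⟨2, by decide⟩ (by decide)) (hsuppg ⟨3, by decide⟩ (by decide)) h23 with hh | hh
      · exact absurd (hginj ⟨5, by decide⟩ ⟨2, by decide⟩ (hz5.trans hh)) (by decide)
      · exact absurd (hginj ⟨5, by decide⟩ ⟨3, by decide⟩ (hz5.trans hh)) (by decide)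
  · -- P2 case
    have hnoinl : ∀ j, f (Sum.inl j) ∉ C.supp := by
      intro j hj
      have hall := chain_inl f hf hSclosed (j₀ := j) (Or.inr hj)
      have hW : ∀ j' : Fin 7, f (Sum.inl j') ≠ w₁ := by
        intro j' h
        obtain ⟨cv, hcv⟩ := hv0
        exact Sum.inl_ne_inr (hinj (h.trans hcv.symm))
      refine pigeon7 (fun p q h => Sum.inl.inj (hinj h)) (T := C.supp) ?_ hcard
      intro j'
      rcases hall j' with h | h
      · exact absurd h (hW j')
      · exact h
    have hnolanded : ∀ x : Wt t, (∀ c, x ≠ Sum.inr (i₀, c)) → f x ∉ C.supp := by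
      intro x hx hmem
      rcases x with j | ⟨i', cc⟩
      · exact hnoinl j hmem
      · have hi' : i' ≠ i₀ := fun h => hx cc (by rw [h])
        have hpe := pair_edge f hinj hf i₀ hu0 hv0 hi'
        have h0 : f (Sum.inr (i', (0 : Fin 2))) ∈ C.supp :=
          hpartner_gen f hinj hf i₀ hu0 hv0 i' cc hi' hmem 0
        have h1' : f (Sum.inr (i', (1 : Fin 2))) ∈ C.supp :=
          hpartner_gen f hinj hf i₀ hu0 hv0 i' cc hi' hmem 1
        rcases hstar _ _ h0 h1' hpe with h | h
        · exact image_ne f hinj i₀ hu0 (Sum.inr (i', 0))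
            (fun c' he => hi' (inr_eq he).1) h.symm
        · exact image_ne f hinj i₀ hu0 (Sum.inr (i', 1))
            (fun c' he => hi' (inr_eq he).1) h.symm
    exact win_single hsat.1 f hinj hf i₀ hu0 hv0 hAz hz hznsupp hnolanded

end Sat356

namespace Sat356
variable {V : Type*} [Fintype V]

lemma ham_three_edges {t : ℕ} {G : SimpleGraph V} {z w₁ : V}
    (hiso : G.neighborSet w₁ = ∅) {C : G.ConnectedComponent} (hz : z ∈ C.supp)
    (f : Wt t → V) (hinj : Function.Injective f)
    (hf : ∀ x y, (PkPlustP2 7 t).Adj x y → (addE G z w₁).Adj (f x) (f y))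
    (hSclosed : ∀ x ∈ insert w₁ C.supp, ∀ y, (addE G z w₁).Adj x y → y ∈ insert w₁ C.supp)
    {jx jy : Fin 7} (hjx : f (Sum.inl jx) = z) (hjy : f (Sum.inl jy) = w₁) :
    ∃ e1 e2 e3 e4 e5 e6 : V, e1 ∈ C.supp ∧ e2 ∈ C.supp ∧ e3 ∈ C.supp ∧ e4 ∈ C.supp ∧
      e5 ∈ C.supp ∧ e6 ∈ C.supp ∧ G.Adj e1 e2 ∧ G.Adj e3 e4 ∧ G.Adj e5 e6 ∧
      e1 ≠ e3 ∧ e1 ≠ e4 ∧ e2 ≠ e3 ∧ e2 ≠ e4 ∧ e1 ≠ e5 ∧ e1 ≠ e6 ∧ e2 ≠ e5 ∧ e2 ≠ e6 ∧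
      e3 ≠ e5 ∧ e3 ≠ e6 ∧ e4 ≠ e5 ∧ e4 ≠ e6 := by
  classical
  set g : Fin 7 → V := fun m => f (Sum.inl m) with hgdef
  have hginj : ∀ m m' : Fin 7, g m = g m' → m = m' := fun m m' h => Sum.inl.inj (hinj h)
  have hadjg : ∀ m : ℕ, (hm : m < 6) →
      (addE G z w₁).Adj (g ⟨m, by omega⟩) (g ⟨m + 1, by omega⟩) :=
    fun m hm => hf _ _ (H_adj_succ hm)
  have hallS : ∀ j, g j ∈ insert w₁ C.supp :=
    chain_inl f hf hSclosed (j₀ := jx) (by rw [hjx]; exact Or.inr hz)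
  have hsuppg : ∀ j : Fin 7, j ≠ jy → g j ∈ C.supp := by
    intro j hj
    rcases hallS j with h | h
    · exact absurd (hginj j jy (h.trans hjy.symm)) hj
    · exact h
  have hjyg : g jy = w₁ := hjy
  have hcast : ∀ {x y y' : V}, (addE G z w₁).Adj x y → y = y' → (addE G z w₁).Adj x y' :=
    fun h e => e ▸ h
  have hforce : ∀ m : Fin 7, m ≠ jy → (addE G z w₁).Adj (g m) w₁ → g m = z := by
    intro m hm hadj
    rw [addE_adj] at hadj
    rcases hadj with h | ⟨_, ⟨h1, h2⟩ | ⟨h1, h2⟩⟩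
    · exact absurd h (isolated_not_adj hiso _)
    · exact h1
    · exact absurd (hginj m jy (h1.trans hjyg.symm)) hm
  have hGedge : ∀ m : ℕ, (hm : m < 6) → m ≠ jy.val → m + 1 ≠ jy.val →
      G.Adj (g ⟨m, by omega⟩) (g ⟨m + 1, by omega⟩) := by
    intro m hm hm1 hm2
    have h := hadjg m hm
    rw [addE_adj] at h
    rcases h with h | ⟨_, ⟨h1, h2⟩ | ⟨h1, h2⟩⟩
    · exact h
    · exact absurd (congrArg Fin.val (hginj _ jy (h2.trans hjyg.symm))) hm2
    · exact absurd (congrArg Fin.val (hginj _ jy (h1.trans hjyg.symm))) hm1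
  rcases (by omega : jy.val = 0 ∨ jy.val = 1 ∨ jy.val = 2 ∨ jy.val = 3 ∨ jy.val = 4 ∨
    jy.val = 5 ∨ jy.val = 6) with h | h | h | h | h | h | h
  · obtain rfl : jy = ⟨0, by decide⟩ := Fin.ext h
    refine ⟨g ⟨1, by decide⟩, g ⟨2, by decide⟩, g ⟨3, by decide⟩, g ⟨4, by decide⟩, g ⟨5, by decide⟩, g ⟨6, by decide⟩, ?_, ?_, ?_, ?_, ?_, ?_, ?_, ?_, ?_, ?_, ?_, ?_, ?_, ?_, ?_, ?_, ?_, ?_, ?_, ?_, ?_⟩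
    · exact hsuppg ⟨1, by decide⟩ (by decide)
    · exact hsuppg ⟨2, by decide⟩ (by decide)
    · exact hsuppg ⟨3, by decide⟩ (by decide)
    · exact hsuppg ⟨4, by decide⟩ (by decide)
    · exact hsuppg ⟨5, by decide⟩ (by decide)
    · exact hsuppg ⟨6, by decide⟩ (by decide)
    · exact hGedge 1 (by decide) (by decide) (by decide)
    · exact hGedge 3 (by decide) (by decide) (by decide)
    · exact hGedge 5 (by decide) (by decide) (by decide)
    · exact fun hh => absurd (hginj ⟨1, by decide⟩ ⟨3, by decide⟩ hh) (by decide)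
    · exact fun hh => absurd (hginj ⟨1, by decide⟩ ⟨4, by decide⟩ hh) (by decide)
    · exact fun hh => absurd (hginj ⟨2, by decide⟩ ⟨3, by decide⟩ hh) (by decide)
    · exact fun hh => absurd (hginj ⟨2, by decide⟩ ⟨4, by decide⟩ hh) (by decide)
    · exact fun hh => absurd (hginj ⟨1, by decide⟩ ⟨5, by decide⟩ hh) (by decide)
    · exact fun hh => absurd (hginj ⟨1, by decide⟩ ⟨6, by decide⟩ hh) (by decide)
    · exact fun hh => absurd (hginj ⟨2, by decide⟩ ⟨5, by decide⟩ hh) (by decide)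
    · exact fun hh => absurd (hginj ⟨2, by decide⟩ ⟨6, by decide⟩ hh) (by decide)
    · exact fun hh => absurd (hginj ⟨3, by decide⟩ ⟨5, by decide⟩ hh) (by decide)
    · exact fun hh => absurd (hginj ⟨3, by decide⟩ ⟨6, by decide⟩ hh) (by decide)
    · exact fun hh => absurd (hginj ⟨4, by decide⟩ ⟨5, by decide⟩ hh) (by decide)
    · exact fun hh => absurd (hginj ⟨4, by decide⟩ ⟨6, by decide⟩ hh) (by decide)
  · obtain rfl : jy = ⟨1, by decide⟩ := Fin.ext h
    have hza : g ⟨0, by decide⟩ = z :=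
      hforce ⟨0, by decide⟩ (by decide) (hcast (hadjg 0 (by omega)) hjyg)
    have hzb : g ⟨2, by decide⟩ = z :=
      hforce ⟨2, by decide⟩ (by decide) (hcast (hadjg 1 (by omega)).symm hjyg)
    exact absurd (hginj ⟨0, by decide⟩ ⟨2, by decide⟩ (hza.trans hzb.symm)) (by decide)
  · obtain rfl : jy = ⟨2, by decide⟩ := Fin.ext h
    have hza : g ⟨1, by decide⟩ = z :=
      hforce ⟨1, by decide⟩ (by decide) (hcast (hadjg 1 (by omega)) hjyg)
    have hzb : g ⟨3, by decide⟩ = z :=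
      hforce ⟨3, by decide⟩ (by decide) (hcast (hadjg 2 (by omega)).symm hjyg)
    exact absurd (hginj ⟨1, by decide⟩ ⟨3, by decide⟩ (hza.trans hzb.symm)) (by decide)
  · obtain rfl : jy = ⟨3, by decide⟩ := Fin.ext h
    have hza : g ⟨2, by decide⟩ = z :=
      hforce ⟨2, by decide⟩ (by decide) (hcast (hadjg 2 (by omega)) hjyg)
    have hzb : g ⟨4, by decide⟩ = z :=
      hforce ⟨4, by decide⟩ (by decide) (hcast (hadjg 3 (by omega)).symm hjyg)
    exact absurd (hginj ⟨2, by decide⟩ ⟨4, by decide⟩ (hza.trans hzb.symm)) (by decide)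
  · obtain rfl : jy = ⟨4, by decide⟩ := Fin.ext h
    have hza : g ⟨3, by decide⟩ = z :=
      hforce ⟨3, by decide⟩ (by decide) (hcast (hadjg 3 (by omega)) hjyg)
    have hzb : g ⟨5, by decide⟩ = z :=
      hforce ⟨5, by decide⟩ (by decide) (hcast (hadjg 4 (by omega)).symm hjyg)
    exact absurd (hginj ⟨3, by decide⟩ ⟨5, by decide⟩ (hza.trans hzb.symm)) (by decide)
  · obtain rfl : jy = ⟨5, by decide⟩ := Fin.ext h
    have hza : g ⟨4, by decide⟩ = z :=
      hforce ⟨4, by decide⟩ (by decide) (hcast (hadjg 4 (by omega)) hjyg)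
    have hzb : g ⟨6, by decide⟩ = z :=
      hforce ⟨6, by decide⟩ (by decide) (hcast (hadjg 5 (by omega)).symm hjyg)
    exact absurd (hginj ⟨4, by decide⟩ ⟨6, by decide⟩ (hza.trans hzb.symm)) (by decide)
  · obtain rfl : jy = ⟨6, by decide⟩ := Fin.ext h
    refine ⟨g ⟨0, by decide⟩, g ⟨1, by decide⟩, g ⟨2, by decide⟩, g ⟨3, by decide⟩, g ⟨4, by decide⟩, g ⟨5, by decide⟩, ?_, ?_, ?_, ?_, ?_, ?_, ?_, ?_, ?_, ?_, ?_, ?_, ?_, ?_, ?_, ?_, ?_, ?_, ?_, ?_, ?_⟩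
    · exact hsuppg ⟨0, by decide⟩ (by decide)
    · exact hsuppg ⟨1, by decide⟩ (by decide)
    · exact hsuppg ⟨2, by decide⟩ (by decide)
    · exact hsuppg ⟨3, by decide⟩ (by decide)
    · exact hsuppg ⟨4, by decide⟩ (by decide)
    · exact hsuppg ⟨5, by decide⟩ (by decide)
    · exact hGedge 0 (by decide) (by decide) (by decide)
    · exact hGedge 2 (by decide) (by decide) (by decide)
    · exact hGedge 4 (by decide) (by decide) (by decide)
    · exact fun hh => absurd (hginj ⟨0, by decide⟩ ⟨2, by decide⟩ hh) (by decide)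
    · exact fun hh => absurd (hginj ⟨0, by decide⟩ ⟨3, by decide⟩ hh) (by decide)
    · exact fun hh => absurd (hginj ⟨1, by decide⟩ ⟨2, by decide⟩ hh) (by decide)
    · exact fun hh => absurd (hginj ⟨1, by decide⟩ ⟨3, by decide⟩ hh) (by decide)
    · exact fun hh => absurd (hginj ⟨0, by decide⟩ ⟨4, by decide⟩ hh) (by decide)
    · exact fun hh => absurd (hginj ⟨0, by decide⟩ ⟨5, by decide⟩ hh) (by decide)
    · exact fun hh => absurd (hginj ⟨1, by decide⟩ ⟨4, by decide⟩ hh) (by decide)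
    · exact fun hh => absurd (hginj ⟨1, by decide⟩ ⟨5, by decide⟩ hh) (by decide)
    · exact fun hh => absurd (hginj ⟨2, by decide⟩ ⟨4, by decide⟩ hh) (by decide)
    · exact fun hh => absurd (hginj ⟨2, by decide⟩ ⟨5, by decide⟩ hh) (by decide)
    · exact fun hh => absurd (hginj ⟨3, by decide⟩ ⟨4, by decide⟩ hh) (by decide)
    · exact fun hh => absurd (hginj ⟨3, by decide⟩ ⟨5, by decide⟩ hh) (by decide)

lemma noinl_P2 {t : ℕ} {G : SimpleGraph V} {z w₁ : V} {C : G.ConnectedComponent}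
    (hcard : C.supp.ncard ≤ 6) (f : Wt t → V) (hinj : Function.Injective f)
    (hf : ∀ x y, (PkPlustP2 7 t).Adj x y → (addE G z w₁).Adj (f x) (f y))
    (hSclosed : ∀ x ∈ insert w₁ C.supp, ∀ y, (addE G z w₁).Adj x y → y ∈ insert w₁ C.supp)
    (i₀ : Fin t) (hv0 : ∃ c, f (Sum.inr (i₀, c)) = w₁) :
    ∀ j, f (Sum.inl j) ∉ C.supp := by
  intro j hj
  have hall := chain_inl f hf hSclosed (j₀ := j) (Or.inr hj)
  have hW : ∀ j' : Fin 7, f (Sum.inl j') ≠ w₁ := by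
    intro j' h
    obtain ⟨cv, hcv⟩ := hv0
    exact Sum.inl_ne_inr (hinj (h.trans hcv.symm))
  refine pigeon7 (fun p q h => Sum.inl.inj (hinj h)) (T := C.supp) ?_ hcard
  intro j'
  rcases hall j' with h | h
  · exact absurd h (hW j')
  · exact h

end Sat356

namespace Sat356
variable {V : Type*} [Fintype V]

lemma comp_clique {t : ℕ} {G : SimpleGraph V} (hsat : IsSaturated (PkPlustP2 7 t) G)
    {w₁ : V} (hiso : G.neighborSet w₁ = ∅) {C : G.ConnectedComponent}
    (hn : C.supp.ncard = 3 ∨ C.supp.ncard = 5 ∨ C.supp.ncard = 6) :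
    G.IsClique C.supp := by
  classical
  by_contra hnc
  rw [SimpleGraph.isClique_iff] at hnc
  unfold Set.Pairwise at hnc
  push_neg at hnc
  obtain ⟨u, hu, v, hv, huv, hnadj⟩ := hnc
  have hcard6 : C.supp.ncard ≤ 6 := by rcases hn with h | h | h <;> omega
  obtain ⟨f, hinj, hf⟩ := sat_copy hsat huv hnadj
  have hSclosed := supp_closed_addE C hu hv
  have hnoinl := pigeonC f hinj hf hSclosed hcard6
  rcases locate hsat.1 f hinj hf with ⟨jx, _, hjx, _⟩ | ⟨i₀, hu0, hv0⟩
  · exact hnoinl jx (by rw [hjx]; exact hu)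
  obtain ⟨z₁, hAuz₁⟩ := exists_nbr hu hv huv
  have hz₁supp : z₁ ∈ C.supp := supp_closed C hu hAuz₁
  have hz₁v : z₁ ≠ v := fun h => hnadj (h ▸ hAuz₁)
  by_cases hL1 : ∃ i₁, i₁ ≠ i₀ ∧ f (Sum.inr (i₁, 0)) ∈ C.supp
  case neg =>
    have hnomem : ∀ x : Wt t, (∀ c, x ≠ Sum.inr (i₀, c)) → f x ∉ C.supp := by
      intro x hx hmem
      rcases x with j | ⟨i', cc⟩
      · exact hnoinl j hmem
      · have hi' : i' ≠ i₀ := fun h => hx cc (by rw [h])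
        exact hL1 ⟨i', hi', hpartner_gen f hinj hf i₀ hu0 hv0 i' cc hi' hmem 0⟩
    exact win_single hsat.1 f hinj hf i₀ hu0 hv0 hAuz₁ hu hz₁supp hnomem
  case pos =>
  obtain ⟨i₁, hi₁0, hp1supp⟩ := hL1
  have hq1supp : f (Sum.inr (i₁, (1 : Fin 2))) ∈ C.supp :=
    hpartner_gen f hinj hf i₀ hu0 hv0 i₁ 0 hi₁0 hp1supp 1
  have hA1 := pair_edge f hinj hf i₀ hu0 hv0 hi₁0
  have hnr1 : ∀ cc : Fin 2, ∀ c' : Fin 2, (Sum.inr (i₁, cc) : Wt t) ≠ Sum.inr (i₀, c') :=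
    fun cc c' he => hi₁0 (inr_eq he).1
  have hp1u : f (Sum.inr (i₁, (0 : Fin 2))) ≠ u := image_ne f hinj i₀ hu0 _ (hnr1 0)
  have hp1v : f (Sum.inr (i₁, (0 : Fin 2))) ≠ v := image_ne f hinj i₀ hv0 _ (hnr1 0)
  have hq1u : f (Sum.inr (i₁, (1 : Fin 2))) ≠ u := image_ne f hinj i₀ hu0 _ (hnr1 1)
  have hq1v : f (Sum.inr (i₁, (1 : Fin 2))) ≠ v := image_ne f hinj i₀ hv0 _ (hnr1 1)
  -- shared endgame when i₁ is the only landed pair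
  have honeland : (∀ i₂ : Fin t, i₂ ≠ i₀ → f (Sum.inr (i₂, 0)) ∈ C.supp → i₂ = i₁) → False := by
    intro hone
    have hnomem1 : ∀ x : Wt t, (∀ c, x ≠ Sum.inr (i₀, c)) → (∀ c, x ≠ Sum.inr (i₁, c)) →
        f x ∉ C.supp := by
      intro x hx0 hx1 hmem
      rcases x with j | ⟨i', cc⟩
      · exact hnoinl j hmem
      · have hi' : i' ≠ i₀ := fun h => hx0 cc (by rw [h])
        exact hx1 cc (by rw [hone i' hi' (hpartner_gen f hinj hf i₀ hu0 hv0 i' cc hi' hmem 0)])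
    by_cases h2d : ∃ e1 e2 e3 e4 : V, e1 ∈ C.supp ∧ e2 ∈ C.supp ∧ e3 ∈ C.supp ∧ e4 ∈ C.supp ∧
        G.Adj e1 e2 ∧ G.Adj e3 e4 ∧ e1 ≠ e3 ∧ e1 ≠ e4 ∧ e2 ≠ e3 ∧ e2 ≠ e4
    · obtain ⟨e1, e2, e3, e4, he1, he2, he3, he4, hA12, hA34, h13, h14, h23, h24⟩ := h2d
      exact win_double hsat.1 f hinj hf i₀ hu0 hv0 i₁ hi₁0 hA12 hA34 he1 he2 he3 he4
        h13 h14 h23 h24 hnomem1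
    · obtain ⟨z₂, hAvz₂⟩ := exists_nbr hv hu huv.symm
      have hz₂supp : z₂ ∈ C.supp := supp_closed C hv hAvz₂
      have hz₂u : z₂ ≠ u := fun h => hnadj (h ▸ hAvz₂).symm
      have hz12 : z₁ = z₂ := by
        by_contra hne
        exact h2d ⟨u, z₁, v, z₂, hu, hz₁supp, hv, hz₂supp, hAuz₁, hAvz₂, huv, hz₂u.symm,
          hz₁v, hne⟩
      have hAvz : G.Adj v z₁ := by rw [hz12]; exact hAvz₂
      have hstar : ∀ x y, x ∈ C.supp → y ∈ C.supp → G.Adj x y → z₁ = x ∨ z₁ = y := by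
        intro x y hx hy hxy
        by_contra hcon
        push_neg at hcon
        have h1 : u = x ∨ u = y := by
          by_contra hc
          push_neg at hc
          exact h2d ⟨u, z₁, x, y, hu, hz₁supp, hx, hy, hAuz₁, hxy, hc.1, hc.2, hcon.1, hcon.2⟩
        have h2 : v = x ∨ v = y := by
          by_contra hc
          push_neg at hc
          exact h2d ⟨v, z₁, x, y, hv, hz₁supp, hx, hy, hAvz, hxy, hc.1, hc.2, hcon.1, hcon.2⟩
        rcases h1 with h1 | h1 <;> rcases h2 with h2 | h2
        · exact huv (h1.trans h2.symm)
        · exact hnadj (by rw [h1, h2]; exact hxy)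
        · exact hnadj (by rw [h1, h2]; exact hxy.symm)
        · exact huv (h1.trans h2.symm)
      exact star_case hsat hiso hz₁supp hAuz₁.symm hu hstar hcard6
  rcases hn with hn3 | hn5 | hn6
  · -- n = 3
    have hsubuv : ({u, v} : Set V) ⊆ C.supp := by
      intro y hy
      rcases hy with rfl | hy
      · exact hu
      · rw [Set.mem_singleton_iff] at hy; subst hy; exact hv
    have hD1 : (C.supp \ {u, v}).ncard = 1 := by
      rw [Set.ncard_diff hsubuv, Set.ncard_pair huv, hn3]
    exact pigeon2 (T := C.supp \ {u, v}) (x := f (Sum.inr (i₁, 0))) (y := f (Sum.inr (i₁, 1)))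
      ⟨hp1supp, by simp [hp1u, hp1v]⟩ ⟨hq1supp, by simp [hq1u, hq1v]⟩ hA1.ne (le_of_eq hD1)
  · -- n = 5
    by_cases hL2 : ∃ i₂, (i₂ ≠ i₀ ∧ f (Sum.inr (i₂, 0)) ∈ C.supp) ∧ i₂ ≠ i₁
    · obtain ⟨i₂, ⟨hi₂0, hp2supp⟩, hi₂₁⟩ := hL2
      have hq2supp : f (Sum.inr (i₂, (1 : Fin 2))) ∈ C.supp :=
        hpartner_gen f hinj hf i₀ hu0 hv0 i₂ 0 hi₂0 hp2supp 1
      have hnr2 : ∀ cc : Fin 2, ∀ c' : Fin 2, (Sum.inr (i₂, cc) : Wt t) ≠ Sum.inr (i₀, c') :=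
        fun cc c' he => hi₂0 (inr_eq he).1
      have hp2u : f (Sum.inr (i₂, (0 : Fin 2))) ≠ u := image_ne f hinj i₀ hu0 _ (hnr2 0)
      have hp2v : f (Sum.inr (i₂, (0 : Fin 2))) ≠ v := image_ne f hinj i₀ hv0 _ (hnr2 0)
      have hq2u : f (Sum.inr (i₂, (1 : Fin 2))) ≠ u := image_ne f hinj i₀ hu0 _ (hnr2 1)
      have hq2v : f (Sum.inr (i₂, (1 : Fin 2))) ≠ v := image_ne f hinj i₀ hv0 _ (hnr2 1)
      have hsubuv : ({u, v} : Set V) ⊆ C.supp := by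
        intro y hy
        rcases hy with rfl | hy
        · exact hu
        · rw [Set.mem_singleton_iff] at hy; subst hy; exact hv
      have hD3 : (C.supp \ {u, v}).ncard = 3 := by
        rw [Set.ncard_diff hsubuv, Set.ncard_pair huv, hn5]
      have hne01 : ((0 : Fin 2)) ≠ 1 := by decide
      refine pigeon4 (T := C.supp \ {u, v})
        (x1 := f (Sum.inr (i₁, 0))) (x2 := f (Sum.inr (i₁, 1)))
        (x3 := f (Sum.inr (i₂, 0))) (x4 := f (Sum.inr (i₂, 1)))
        ⟨hp1supp, by simp [hp1u, hp1v]⟩ ⟨hq1supp, by simp [hq1u, hq1v]⟩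
        ⟨hp2supp, by simp [hp2u, hp2v]⟩ ⟨hq2supp, by simp [hq2u, hq2v]⟩
        ?_ ?_ ?_ ?_ ?_ ?_ (le_of_eq hD3)
      · exact fun h => hne01 (inr_eq (hinj h)).2
      · exact fun h => hi₂₁ ((inr_eq (hinj h)).1).symm
      · exact fun h => hi₂₁ ((inr_eq (hinj h)).1).symm
      · exact fun h => hi₂₁ ((inr_eq (hinj h)).1).symm
      · exact fun h => hi₂₁ ((inr_eq (hinj h)).1).symm
      · exact fun h => hne01 (inr_eq (hinj h)).2
    · refine honeland (fun i₂ hne hsupp => ?_)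
      by_contra hcon
      exact hL2 ⟨i₂, ⟨hne, hsupp⟩, hcon⟩
  · -- n = 6
    by_cases hL2 : ∃ i₂, (i₂ ≠ i₀ ∧ f (Sum.inr (i₂, 0)) ∈ C.supp) ∧ i₂ ≠ i₁
    case neg =>
      refine honeland (fun i₂ hne hsupp => ?_)
      by_contra hcon
      exact hL2 ⟨i₂, ⟨hne, hsupp⟩, hcon⟩
    case pos =>
    obtain ⟨i₂, ⟨hi₂0, hp2supp⟩, hi₂₁⟩ := hL2
    have hi₁₂ : i₁ ≠ i₂ := hi₂₁.symm
    have hq2supp : f (Sum.inr (i₂, (1 : Fin 2))) ∈ C.supp :=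
      hpartner_gen f hinj hf i₀ hu0 hv0 i₂ 0 hi₂0 hp2supp 1
    have hA2 := pair_edge f hinj hf i₀ hu0 hv0 hi₂0
    have hnr2 : ∀ cc : Fin 2, ∀ c' : Fin 2, (Sum.inr (i₂, cc) : Wt t) ≠ Sum.inr (i₀, c') :=
      fun cc c' he => hi₂0 (inr_eq he).1
    set p1 := f (Sum.inr (i₁, (0 : Fin 2))) with hp1def
    set q1 := f (Sum.inr (i₁, (1 : Fin 2))) with hq1def
    set p2 := f (Sum.inr (i₂, (0 : Fin 2))) with hp2def
    set q2 := f (Sum.inr (i₂, (1 : Fin 2))) with hq2def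
    have hp2u : p2 ≠ u := image_ne f hinj i₀ hu0 _ (hnr2 0)
    have hp2v : p2 ≠ v := image_ne f hinj i₀ hv0 _ (hnr2 0)
    have hq2u : q2 ≠ u := image_ne f hinj i₀ hu0 _ (hnr2 1)
    have hq2v : q2 ≠ v := image_ne f hinj i₀ hv0 _ (hnr2 1)
    have hne01 : ((0 : Fin 2)) ≠ 1 := by decide
    have hp1q1 : p1 ≠ q1 := hA1.ne
    have hp2q2 : p2 ≠ q2 := hA2.ne
    have hp1p2 : p1 ≠ p2 := fun h => hi₁₂ (inr_eq (hinj h)).1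
    have hp1q2 : p1 ≠ q2 := fun h => hi₁₂ (inr_eq (hinj h)).1
    have hq1p2 : q1 ≠ p2 := fun h => hi₁₂ (inr_eq (hinj h)).1
    have hq1q2 : q1 ≠ q2 := fun h => hi₁₂ (inr_eq (hinj h)).1
    -- C.supp is exactly these six vertices
    have hsub6 : ({u, v, p1, q1, p2, q2} : Set V) ⊆ C.supp := by
      intro y hy
      simp only [Set.mem_insert_iff, Set.mem_singleton_iff] at hy
      rcases hy with rfl | rfl | rfl | rfl | rfl | rfl
      · exact hu
      · exact hv
      · exact hp1supp
      · exact hq1supp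
      · exact hp2supp
      · exact hq2supp
    have hcard6' : ({u, v, p1, q1, p2, q2} : Set V).ncard = 6 := by
      rw [Set.ncard_insert_of_notMem (by simp [huv, hp1u.symm, hq1u.symm, hp2u.symm, hq2u.symm]),
        Set.ncard_insert_of_notMem (by simp [hp1v.symm, hq1v.symm, hp2v.symm, hq2v.symm]),
        Set.ncard_insert_of_notMem (by simp [hp1q1, hp1p2, hp1q2]),
        Set.ncard_insert_of_notMem (by simp [hq1p2, hq1q2]),
        Set.ncard_insert_of_notMem (by simp [hp2q2]), Set.ncard_singleton]
    have hD : ({u, v, p1, q1, p2, q2} : Set V) = C.supp :=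
      Set.eq_of_subset_of_ncard_le hsub6 (by rw [hn6, hcard6']) C.supp.toFinite
    have hmem_of_supp : ∀ y ∈ C.supp, mem6 u v p1 q1 p2 q2 y := by
      intro y hy
      rw [← hD] at hy
      simpa [mem6, Set.mem_insert_iff, Set.mem_singleton_iff] using hy
    have hsupp_of_mem : ∀ y, mem6 u v p1 q1 p2 q2 y → y ∈ C.supp := by
      intro y hy
      rw [← hD]
      simpa [mem6, Set.mem_insert_iff, Set.mem_singleton_iff] using hy
    have hthird : ∀ i₃ : Fin t, i₃ ≠ i₀ → f (Sum.inr (i₃, 0)) ∈ C.supp → i₃ = i₁ ∨ i₃ = i₂ := by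
      intro i₃ h₃0 h₃supp
      by_contra hcon
      push_neg at hcon
      have h := hmem_of_supp _ h₃supp
      rcases h with h | h | h | h | h | h
      · exact image_ne f hinj i₀ hu0 _ (fun c' he => h₃0 (inr_eq he).1) h
      · exact image_ne f hinj i₀ hv0 _ (fun c' he => h₃0 (inr_eq he).1) h
      · exact hcon.1 (inr_eq (hinj h)).1
      · exact hcon.1 (inr_eq (hinj h)).1
      · exact hcon.2 (inr_eq (hinj h)).1
      · exact hcon.2 (inr_eq (hinj h)).1
    have hnomem2 : ∀ x : Wt t, (∀ c, x ≠ Sum.inr (i₀, c)) → (∀ c, x ≠ Sum.inr (i₁, c)) →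
        (∀ c, x ≠ Sum.inr (i₂, c)) → f x ∉ C.supp := by
      intro x hx0 hx1 hx2 hmem
      rcases x with j | ⟨i', cc⟩
      · exact hnoinl j hmem
      · have hi' : i' ≠ i₀ := fun h => hx0 cc (by rw [h])
        rcases hthird i' hi' (hpartner_gen f hinj hf i₀ hu0 hv0 i' cc hi' hmem 0) with h | h
        · exact hx1 cc (by rw [h])
        · exact hx2 cc (by rw [h])
    have hno3k : NO3 G u v p1 q1 p2 q2 := by
      rintro ⟨x1, y1, x2, y2, x3, y3, m1, m2, m3, m4, m5, m6,
        n1, n2, n3, n4, n5, n6, n7, n8, n9, n10, n11, n12, A1, A2, A3⟩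
      exact win_triple hsat.1 f hinj hf i₀ hu0 hv0 i₁ i₂ hi₁0 hi₂0 hi₁₂ A1 A2 A3
        (hsupp_of_mem _ m1) (hsupp_of_mem _ m2) (hsupp_of_mem _ m3) (hsupp_of_mem _ m4)
        (hsupp_of_mem _ m5) (hsupp_of_mem _ m6)
        n1 n2 n3 n4 n5 n6 n7 n8 n9 n10 n11 n12 hnomem2
    have hw₁C : w₁ ∉ C.supp := isolated_not_mem_supp hiso hu hv huv
    have hD2k : D2ALL G u v p1 q1 p2 q2 := by
      intro z hzmem
      have hzsupp : z ∈ C.supp := hsupp_of_mem z hzmem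
      have hznb : ∃ zn, G.Adj z zn := by
        by_cases hzu : z = u
        · exact exists_nbr hzsupp hv (hzu ▸ huv)
        · exact exists_nbr hzsupp hu hzu
      obtain ⟨zn, hAzzn⟩ := hznb
      have hznsupp : zn ∈ C.supp := supp_closed C hzsupp hAzzn
      have hzw : z ≠ w₁ := fun h => hw₁C (h ▸ hzsupp)
      have hnadj2 : ¬ G.Adj z w₁ := isolated_not_adj hiso z
      obtain ⟨f₂, hinj₂, hf₂⟩ := sat_copy hsat hzw hnadj2
      have hS2closed : ∀ x ∈ insert w₁ C.supp, ∀ y, (addE G z w₁).Adj x y →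
          y ∈ insert w₁ C.supp := by
        intro x hx y hxy
        rw [addE_adj] at hxy
        rcases hxy with h | ⟨_, ⟨rfl, rfl⟩ | ⟨rfl, rfl⟩⟩
        · rcases hx with rfl | hx
          · exact absurd h.symm (isolated_not_adj hiso y)
          · exact Or.inr (supp_closed C hx h)
        · exact Or.inl rfl
        · exact Or.inr hzsupp
      rcases locate hsat.1 f₂ hinj₂ hf₂ with ⟨jx, jy, hjx, hjy⟩ | ⟨i₀', hu0', hv0'⟩
      · -- Hamiltonian path case : 3 disjoint edges, contradicting hno3k
        obtain ⟨e1, e2, e3, e4, e5, e6, he1, he2, he3, he4, he5, he6, hA12, hA34, hA56,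
          n1, n2, n3, n4, n5, n6, n7, n8, n9, n10, n11, n12⟩ :=
          ham_three_edges hiso hzsupp f₂ hinj₂ hf₂ hS2closed hjx hjy
        exact absurd ⟨e1, e2, e3, e4, e5, e6, hmem_of_supp _ he1, hmem_of_supp _ he2,
          hmem_of_supp _ he3, hmem_of_supp _ he4, hmem_of_supp _ he5, hmem_of_supp _ he6,
          n1, n2, n3, n4, n5, n6, n7, n8, n9, n10, n11, n12, hA12, hA34, hA56⟩ hno3k
      · -- P2 case for the second move
        have hnoinl₂ := noinl_P2 hcard6 f₂ hinj₂ hf₂ hS2closed i₀' hv0'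
        by_cases hL1' : ∃ j₁, j₁ ≠ i₀' ∧ f₂ (Sum.inr (j₁, 0)) ∈ C.supp
        case neg =>
          have hnomem' : ∀ x : Wt t, (∀ c, x ≠ Sum.inr (i₀', c)) → f₂ x ∉ C.supp := by
            intro x hx hmem
            rcases x with j | ⟨i', cc⟩
            · exact hnoinl₂ j hmem
            · have hi' : i' ≠ i₀' := fun h => hx cc (by rw [h])
              exact hL1' ⟨i', hi', hpartner_gen f₂ hinj₂ hf₂ i₀' hu0' hv0' i' cc hi' hmem 0⟩
          exact (win_single hsat.1 f₂ hinj₂ hf₂ i₀' hu0' hv0' hAzzn hzsupp hznsupp hnomem').elim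
        case pos =>
        obtain ⟨j₁, hj₁0, hP1supp⟩ := hL1'
        have hQ1supp : f₂ (Sum.inr (j₁, (1 : Fin 2))) ∈ C.supp :=
          hpartner_gen f₂ hinj₂ hf₂ i₀' hu0' hv0' j₁ 0 hj₁0 hP1supp 1
        have hB1 := pair_edge f₂ hinj₂ hf₂ i₀' hu0' hv0' hj₁0
        have hnrj1 : ∀ cc : Fin 2, ∀ c' : Fin 2,
            (Sum.inr (j₁, cc) : Wt t) ≠ Sum.inr (i₀', c') := fun cc c' he => hj₁0 (inr_eq he).1
        by_cases hL2' : ∃ j₂, (j₂ ≠ i₀' ∧ f₂ (Sum.inr (j₂, 0)) ∈ C.supp) ∧ j₂ ≠ j₁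
        case neg =>
          have hnomem'' : ∀ x : Wt t, (∀ c, x ≠ Sum.inr (i₀', c)) →
              (∀ c, x ≠ Sum.inr (j₁, c)) → f₂ x ∉ C.supp := by
            intro x hx0 hx1 hmem
            rcases x with j | ⟨i', cc⟩
            · exact hnoinl₂ j hmem
            · have hi' : i' ≠ i₀' := fun h => hx0 cc (by rw [h])
              have hmem0 := hpartner_gen f₂ hinj₂ hf₂ i₀' hu0' hv0' i' cc hi' hmem 0
              by_cases hii : i' = j₁
              · exact hx1 cc (by rw [hii])
              · exact hL2' ⟨i', ⟨hi', hmem0⟩, hii⟩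
          exact (win_double hsat.1 f₂ hinj₂ hf₂ i₀' hu0' hv0' j₁ hj₁0 hA1 hA2
            hp1supp hq1supp hp2supp hq2supp hp1p2 hp1q2 hq1p2 hq1q2 hnomem'').elim
        case pos =>
        obtain ⟨j₂, ⟨hj₂0, hP2supp⟩, hj₂₁⟩ := hL2'
        have hQ2supp : f₂ (Sum.inr (j₂, (1 : Fin 2))) ∈ C.supp :=
          hpartner_gen f₂ hinj₂ hf₂ i₀' hu0' hv0' j₂ 0 hj₂0 hP2supp 1
        have hB2 := pair_edge f₂ hinj₂ hf₂ i₀' hu0' hv0' hj₂0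
        have hnrj2 : ∀ cc : Fin 2, ∀ c' : Fin 2,
            (Sum.inr (j₂, cc) : Wt t) ≠ Sum.inr (i₀', c') := fun cc c' he => hj₂0 (inr_eq he).1
        refine ⟨f₂ (Sum.inr (j₁, 0)), f₂ (Sum.inr (j₁, 1)), f₂ (Sum.inr (j₂, 0)),
          f₂ (Sum.inr (j₂, 1)), hmem_of_supp _ hP1supp, hmem_of_supp _ hQ1supp,
          hmem_of_supp _ hP2supp, hmem_of_supp _ hQ2supp,
          image_ne f₂ hinj₂ i₀' hu0' _ (hnrj1 0), image_ne f₂ hinj₂ i₀' hu0' _ (hnrj1 1),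
          image_ne f₂ hinj₂ i₀' hu0' _ (hnrj2 0), image_ne f₂ hinj₂ i₀' hu0' _ (hnrj2 1),
          ?_, ?_, ?_, ?_, hB1, hB2⟩
        · exact fun h => hj₂₁ ((inr_eq (hinj₂ h)).1).symm
        · exact fun h => hj₂₁ ((inr_eq (hinj₂ h)).1).symm
        · exact fun h => hj₂₁ ((inr_eq (hinj₂ h)).1).symm
        · exact fun h => hj₂₁ ((inr_eq (hinj₂ h)).1).symm
    have hCR1k : CR3 G u p2 q2 v p1 q1 := by
      have hvnot : v ∉ ({x | x = u ∨ x = p2 ∨ x = q2} : Set V) := by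
        intro h
        rcases h with h | h | h
        · exact huv h.symm
        · exact hp2v h.symm
        · exact hq2v h.symm
      obtain ⟨p, q, hpS, hqS, hApq⟩ :=
        crossing hu hv (Or.inl rfl : u ∈ ({x | x = u ∨ x = p2 ∨ x = q2} : Set V)) hvnot
      have hpsupp : p ∈ C.supp := by
        rcases hpS with rfl | rfl | rfl
        · exact hu
        · exact hp2supp
        · exact hq2supp
      have hqsupp : q ∈ C.supp := supp_closed C hpsupp hApq
      refine ⟨p, q, hpS, ?_, hApq⟩
      rcases hmem_of_supp q hqsupp with h | h | h | h | h | h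
      · exact absurd (Or.inl h) hqS
      · exact Or.inl h
      · exact Or.inr (Or.inl h)
      · exact Or.inr (Or.inr h)
      · exact absurd (Or.inr (Or.inl h)) hqS
      · exact absurd (Or.inr (Or.inr h)) hqS
    have hCR2k : CR3 G u p1 q1 v p2 q2 := by
      have hvnot : v ∉ ({x | x = u ∨ x = p1 ∨ x = q1} : Set V) := by
        intro h
        rcases h with h | h | h
        · exact huv h.symm
        · exact hp1v h.symm
        · exact hq1v h.symm
      obtain ⟨p, q, hpS, hqS, hApq⟩ :=
        crossing hu hv (Or.inl rfl : u ∈ ({x | x = u ∨ x = p1 ∨ x = q1} : Set V)) hvnot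
      have hpsupp : p ∈ C.supp := by
        rcases hpS with rfl | rfl | rfl
        · exact hu
        · exact hp1supp
        · exact hq1supp
      have hqsupp : q ∈ C.supp := supp_closed C hpsupp hApq
      refine ⟨p, q, hpS, ?_, hApq⟩
      rcases hmem_of_supp q hqsupp with h | h | h | h | h | h
      · exact absurd (Or.inl h) hqS
      · exact Or.inl h
      · exact absurd (Or.inr (Or.inl h)) hqS
      · exact absurd (Or.inr (Or.inr h)) hqS
      · exact Or.inr (Or.inl h)
      · exact Or.inr (Or.inr h)
    obtain ⟨z₂, hAvz₂⟩ := exists_nbr hv hu huv.symm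
    have hz₂supp : z₂ ∈ C.supp := supp_closed C hv hAvz₂
    exact kern0 huv hp1u.symm hq1u.symm hp2u.symm hq2u.symm hp1v.symm hq1v.symm hp2v.symm
      hq2v.symm hp1q1 hp1p2 hp1q2 hq1p2 hq1q2 hp2q2 hA1 hA2 hnadj hno3k hD2k hCR1k hCR2k
      ⟨z₁, hmem_of_supp _ hz₁supp, hAuz₁⟩ ⟨z₂, hmem_of_supp _ hz₂supp, hAvz₂⟩

end Sat356


theorem components_356_clique_no_K2_K4 {V : Type*} [Fintype V] (G : SimpleGraph V)
    (t : ℕ) (ht : 1 ≤ t) (hsat : IsSaturated (PkPlustP2 7 t) G)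
    (w₁ w₂ : V) (hw : w₁ ≠ w₂)
    (h1 : G.neighborSet w₁ = ∅) (h2 : G.neighborSet w₂ = ∅) :
    (∀ C : G.ConnectedComponent,
      (C.supp.ncard = 3 ∨ C.supp.ncard = 5 ∨ C.supp.ncard = 6) → G.IsClique C.supp) ∧
    (∀ C : G.ConnectedComponent,
      ¬ Nonempty ((G.induce C.supp) ≃g completeGraph (Fin 2)) ∧
      ¬ Nonempty ((G.induce C.supp) ≃g completeGraph (Fin 4))) := by
  classical
  constructor
  · intro C hn
    exact Sat356.comp_clique hsat h1 hn
  · intro C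
    constructor
    · rintro ⟨e⟩
      set ε : ↥C.supp ≃ Fin 2 := e.toEquiv with hεdef
      have hAdj : ∀ x y : Fin 2, x ≠ y →
          G.Adj (↑(ε.symm x) : V) (↑(ε.symm y) : V) := by
        intro x y hxy
        have h : (completeGraph (Fin 2)).Adj (e (ε.symm x)) (e (ε.symm y)) := by
          rw [show e (ε.symm x) = x from Equiv.apply_symm_apply ε x,
            show e (ε.symm y) = y from Equiv.apply_symm_apply ε y]
          exact hxy
        exact e.map_rel_iff.mp h
      have hsupp2 : ∀ y ∈ C.supp, y = ↑(ε.symm 0) ∨ y = ↑(ε.symm 1) := by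
        intro y hy
        have hval : (ε ⟨y, hy⟩).val = 0 ∨ (ε ⟨y, hy⟩).val = 1 := by omega
        rcases hval with h | h
        · left
          have h0 : ε ⟨y, hy⟩ = 0 := Fin.ext h
          have := congrArg (fun x => (↑(ε.symm x) : V)) h0
          simpa [Equiv.symm_apply_apply] using this
        · right
          have h0 : ε ⟨y, hy⟩ = 1 := Fin.ext h
          have := congrArg (fun x => (↑(ε.symm x) : V)) h0
          simpa [Equiv.symm_apply_apply] using this
      exact Sat356.comp_no_K2 hsat h1 (ε.symm 0).2 (ε.symm 1).2
        (hAdj 0 1 (by decide)) hsupp2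
    · rintro ⟨e⟩
      set ε : ↥C.supp ≃ Fin 4 := e.toEquiv with hεdef
      have hAdj : ∀ x y : Fin 4, x ≠ y →
          G.Adj (↑(ε.symm x) : V) (↑(ε.symm y) : V) := by
        intro x y hxy
        have h : (completeGraph (Fin 4)).Adj (e (ε.symm x)) (e (ε.symm y)) := by
          rw [show e (ε.symm x) = x from Equiv.apply_symm_apply ε x,
            show e (ε.symm y) = y from Equiv.apply_symm_apply ε y]
          exact hxy
        exact e.map_rel_iff.mp h
      have hsupp4 : ∀ y ∈ C.supp, y = ↑(ε.symm 0) ∨ y = ↑(ε.symm 1) ∨ y = ↑(ε.symm 2) ∨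
          y = ↑(ε.symm 3) := by
        intro y hy
        have hval : (ε ⟨y, hy⟩).val = 0 ∨ (ε ⟨y, hy⟩).val = 1 ∨ (ε ⟨y, hy⟩).val = 2 ∨
            (ε ⟨y, hy⟩).val = 3 := by omega
        have key : ∀ k : Fin 4, ε ⟨y, hy⟩ = k → y = ↑(ε.symm k) := by
          intro k hk
          have := congrArg (fun x => (↑(ε.symm x) : V)) hk
          simpa [Equiv.symm_apply_apply] using this
        rcases hval with h | h | h | h
        · exact Or.inl (key 0 (Fin.ext h))
        · exact Or.inr (Or.inl (key 1 (Fin.ext h)))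
        · exact Or.inr (Or.inr (Or.inl (key 2 (Fin.ext h))))
        · exact Or.inr (Or.inr (Or.inr (key 3 (Fin.ext h))))
      exact Sat356.comp_no_K4 hsat h1 (ε.symm 0).2 (ε.symm 1).2 (ε.symm 2).2 (ε.symm 3).2
        (hAdj 0 1 (by decide)) (hAdj 0 2 (by decide)) (hAdj 0 3 (by decide))
        (hAdj 1 2 (by decide)) (hAdj 1 3 (by decide)) (hAdj 2 3 (by decide)) hsupp4
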